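/- arXiv:2305.06250 — 7 statements merged into one kernel-verified Lean document; each statement's English description precedes it below -/
import Mathlib

section
/- The polymatroidal axioms (nonnegativity, monotonicity, submodularity) for a set function h: 2^{N_n} → ℝ with h(∅) = 0 are equivalent to the elemental inequalities: h(N_n) ≥ h(N_n \ {i}) for each i ∈ N_n, and h(K) + h(K ∪ {i,j}) ≤ h(K ∪ {i}) + h(K ∪ {j}) for all distinct i, j ∈ N_n and K ⊆ N_n \ {i,j}. -/
/-!
Submodularity is equivalent to diminishing marginal returns: adding a set `C` to `K` gains at
least as much as adding it to a superset `L` of `K`. The elemental inequalities are exactly the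
case of single elements `C = {i}` and `L = insert j K`; chaining them one element of `L \ K` at a
time, and then one element of `C` at a time, recovers the general case. Monotonicity then reduces
to adding one element `i` to any set, which by diminishing returns gains at least as much as
adding `i` to `univ.erase i`, and that gain is nonnegative by the remaining elemental inequality.
-/

open Finset

variable {α : Type*} [DecidableEq α]

def IsElementalSubmodular (h : Finset α → ℝ) : Prop :=
  ∀ i j : α, ∀ K : Finset α, i ≠ j → i ∉ K → j ∉ K →
    h K + h (insert i (insert j K)) ≤ h (insert i K) + h (insert j K)

lemma isElementalSubmodular_of_submodular {h : Finset α → ℝ}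
    (hsub : ∀ A B : Finset α, h (A ∩ B) + h (A ∪ B) ≤ h A + h B) :
    IsElementalSubmodular h := by
  intro i j K hij hiK hjK
  have hinter : insert i K ∩ insert j K = K := by
    rw [insert_inter_of_notMem (by simp [hij, hiK]), inter_insert_of_notMem hjK, inter_self]
  have hunion : insert i K ∪ insert j K = insert i (insert j K) := by
    rw [insert_union, union_insert, union_self]
  simpa only [hinter, hunion] using hsub (insert i K) (insert j K)

namespace IsElementalSubmodular

variable {h : Finset α → ℝ}

lemma insert_add_le_of_subset (hel : IsElementalSubmodular h) {K L : Finset α} {i : α}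
    (hKL : K ⊆ L) (hiL : i ∉ L) :
    h (insert i L) + h K ≤ h (insert i K) + h L := by
  obtain ⟨D, hDK, rfl⟩ : ∃ D, Disjoint D K ∧ L = K ∪ D :=
    ⟨L \ K, sdiff_disjoint, (union_sdiff_of_subset hKL).symm⟩
  clear hKL
  induction D using Finset.induction_on with
  | empty => simp
  | insert j D hjD ih =>
    rw [disjoint_insert_left] at hDK
    rw [union_insert] at hiL ⊢
    have hij : i ≠ j := by rintro rfl; exact hiL (mem_insert_self i _)
    have hiKD : i ∉ K ∪ D := fun hi => hiL (mem_insert_of_mem hi)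
    have hjKD : j ∉ K ∪ D := by simp [hDK.1, hjD]
    linarith [ih hDK.2 hiKD, hel i j (K ∪ D) hij hiKD hjKD]

lemma union_add_le_of_subset (hel : IsElementalSubmodular h) {K L : Finset α} (C : Finset α)
    (hKL : K ⊆ L) (hCL : Disjoint C L) :
    h (L ∪ C) + h K ≤ h (K ∪ C) + h L := by
  induction C using Finset.induction_on with
  | empty => rw [union_empty, union_empty, add_comm]
  | insert i C hiC ih =>
    rw [disjoint_insert_left] at hCL
    have hiLC : i ∉ L ∪ C := by simp [hCL.1, hiC]
    have step := hel.insert_add_le_of_subset (union_subset_union_left hKL) hiLC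
    rw [union_insert, union_insert]
    linarith [ih hCL.2]

lemma submodular (hel : IsElementalSubmodular h) (A B : Finset α) :
    h (A ∩ B) + h (A ∪ B) ≤ h A + h B := by
  have key := hel.union_add_le_of_subset (B \ A) (inter_subset_left (s₂ := B)) sdiff_disjoint
  have hB : A ∩ B ∪ B \ A = B := by rw [union_comm, inter_comm, sdiff_union_inter]
  rw [union_sdiff_self_eq_union, hB] at key
  linarith

lemma monotone [Fintype α] (hel : IsElementalSubmodular h)
    (htop : ∀ i : α, h (univ.erase i) ≤ h univ) : Monotone h := by
  refine monotone_iff_forall_le_insert.2 fun A i hiA => ?_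
  have key := hel.insert_add_le_of_subset (subset_erase.2 ⟨subset_univ A, hiA⟩)
    (notMem_erase i univ)
  rw [insert_erase (mem_univ i)] at key
  linarith [htop i]

end IsElementalSubmodular

/-- The polymatroidal axioms (nonnegativity, monotonicity, submodularity) for a
set function h on 2^{N_n} with h(∅) = 0 are equivalent to the elemental
inequalities. -/
theorem polymatroid_axioms_iff_elemental (n : ℕ) (h : Finset (Fin n) → ℝ)
    (h0 : h ∅ = 0) :
    ((∀ A : Finset (Fin n), 0 ≤ h A) ∧
     (∀ A B : Finset (Fin n), A ⊆ B → h A ≤ h B) ∧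
     (∀ A B : Finset (Fin n), h (A ∩ B) + h (A ∪ B) ≤ h A + h B))
    ↔
    ((∀ i : Fin n, h (Finset.univ.erase i) ≤ h Finset.univ) ∧
     (∀ i j : Fin n, ∀ K : Finset (Fin n), i ≠ j → i ∉ K → j ∉ K →
        h K + h (insert i (insert j K)) ≤ h (insert i K) + h (insert j K))) := by
  constructor
  · rintro ⟨-, hmono, hsub⟩
    exact ⟨fun i => hmono _ _ (erase_subset i univ), isElementalSubmodular_of_submodular hsub⟩
  · rintro ⟨htop, hel⟩
    have hmono : Monotone h := IsElementalSubmodular.monotone hel htop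
    exact ⟨fun A => h0 ▸ hmono (empty_subset A), fun _ _ hAB => hmono hAB,
      IsElementalSubmodular.submodular hel⟩
end

section
/- Let h = a·r₁ + b·r₂ where r₁ is the rank function of the matroid U^{123}_{2,3} on N_4 (rank function A ↦ min(2, |A ∩ {1,2,3}|)) and r₂ is the rank function of U^{1}_{1,1} (A ↦ min(1, |A ∩ {1}|)), with a, b ≥ 0. If h is an entropy function, then a = log k for some positive integer k. -/
open Finset

/-- Probability that the discrete random variable `Y` (on finite sample space `Ω`
with pmf `p`) takes the value `s`. -/
noncomputable def pr {Ω : Type} [Fintype Ω] {S : Type} [DecidableEq S]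
    (p : Ω → ℝ) (Y : Ω → S) (s : S) : ℝ := ∑ ω, if Y ω = s then p ω else 0

/-- Shannon entropy (base 2) of the discrete random variable `Y`. -/
noncomputable def ent {Ω : Type} [Fintype Ω] {S : Type} [DecidableEq S]
    (p : Ω → ℝ) (Y : Ω → S) : ℝ :=
  - ∑ s ∈ Finset.univ.image Y, pr p Y s * Real.logb 2 (pr p Y s)

/-- `h : 2^{N_n} → ℝ` is entropic: it is the entropy function of some random
vector `(X_1, …, X_n)` on finite alphabets. -/
def IsEntropic (n : ℕ) (h : Finset (Fin n) → ℝ) : Prop :=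
  ∃ (m : Fin n → ℕ) (p : (∀ i, Fin (m i)) → ℝ),
    (∀ x, 0 ≤ p x) ∧ (∑ x, p x) = 1 ∧
    ∀ A : Finset (Fin n), h A = ent p (fun x (i : A) => x i.1)

/-- Rank function of the matroid U^{B}_{k,|B|} on N₄ = {0,1,2,3}:
A ↦ min(k, |A ∩ B|); elements outside B are loops. -/
noncomputable def rkU (k : ℕ) (B : Finset (Fin 4)) (A : Finset (Fin 4)) : ℝ :=
  min (k : ℝ) ((A ∩ B).card : ℝ)

/-!
Write `X₀, X₁, X₂` for the first three coordinates. The entropy values say that these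
variables are pairwise independent (equality in subadditivity, i.e. the equality case of Gibbs'
inequality) and that `H(X₀X₁X₂) = H(X₀X₁) = H(X₀X₂)`, which forces
`P(x₀,x₁) = P(x₀,x₁,x₂) = P(x₀,x₂)` on every atom of positive probability. On such an atom
`P(x₀)P(x₁) = P(x₀)P(x₂)`, so `P(x₁) = P(x₂)`; since `X₁, X₂` are independent, every pair of
points of positive probability occurs in an atom. Hence `X₁` is uniform on its support, of size
`k` say, and `a = H(X₁) = log k`.
-/

section Distribution

variable {Ω : Type} [Fintype Ω] {S T : Type} [DecidableEq S] [DecidableEq T] (p : Ω → ℝ)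

lemma pr_nonneg (hp : ∀ ω, 0 ≤ p ω) (Y : Ω → S) (s : S) : 0 ≤ pr p Y s :=
  Finset.sum_nonneg fun ω _ => by split_ifs <;> simp [hp ω]

lemma le_pr_apply (hp : ∀ ω, 0 ≤ p ω) (Y : Ω → S) (ω : Ω) : p ω ≤ pr p Y (Y ω) := by
  have := Finset.single_le_sum (f := fun ω' => if Y ω' = Y ω then p ω' else 0)
    (fun ω' _ => by split_ifs <;> simp [hp ω']) (Finset.mem_univ ω)
  simpa [pr] using this

lemma pr_le_pr_comp (hp : ∀ ω, 0 ≤ p ω) (V : Ω → S) (f : S → T) (s : S) :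
    pr p V s ≤ pr p (f ∘ V) (f s) :=
  Finset.sum_le_sum fun ω _ => by
    by_cases h : V ω = s
    · simp [h]
    · rw [if_neg h]; split_ifs <;> simp [hp ω]

lemma exists_eq_and_pos_of_pr_pos {Y : Ω → S} {s : S} (h : 0 < pr p Y s) :
    ∃ ω, Y ω = s ∧ 0 < p ω := by
  by_contra! hne
  refine h.not_ge (Finset.sum_nonpos fun ω _ => ?_)
  split_ifs with hω
  exacts [hne ω hω, le_rfl]

lemma sum_mul_comp_eq_sum_pr_mul [Fintype S] (Y : Ω → S) (g : S → ℝ) :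
    ∑ ω, p ω * g (Y ω) = ∑ s, pr p Y s * g s := by
  simp only [pr, Finset.sum_mul, ite_mul, zero_mul]
  rw [Finset.sum_comm]
  simp

lemma sum_pr_eq_one [Fintype S] (hp : ∑ ω, p ω = 1) (Y : Ω → S) : ∑ s, pr p Y s = 1 := by
  simpa using (sum_mul_comp_eq_sum_pr_mul p Y fun _ => 1).symm.trans (by simpa using hp)

lemma exists_pr_pos [Fintype S] (hp : ∑ ω, p ω = 1) (Y : Ω → S) : ∃ s, 0 < pr p Y s := by
  by_contra! h
  have := sum_pr_eq_one p hp Y ▸ Finset.sum_nonpos fun s _ => h s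
  norm_num at this

end Distribution

section Entropy

variable {Ω : Type} [Fintype Ω] {S T : Type} [DecidableEq S] [DecidableEq T] (p : Ω → ℝ)

lemma ent_eq_neg_sum [Fintype S] (Y : Ω → S) :
    ent p Y = -∑ s, pr p Y s * Real.logb 2 (pr p Y s) := by
  rw [ent, Finset.sum_subset (Finset.subset_univ _)]
  intro s _ hs
  have hzero : pr p Y s = 0 := Finset.sum_eq_zero fun ω _ =>
    if_neg fun h : Y ω = s => hs (h ▸ Finset.mem_image_of_mem Y (Finset.mem_univ ω))
  rw [hzero, zero_mul]

lemma ent_eq_neg_sum_mul_logb_pr_apply [Fintype S] (Y : Ω → S) :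
    ent p Y = -∑ ω, p ω * Real.logb 2 (pr p Y (Y ω)) := by
  rw [ent_eq_neg_sum, sum_mul_comp_eq_sum_pr_mul p Y fun s => Real.logb 2 (pr p Y s)]

lemma pr_apply_congr {Y : Ω → S} {Z : Ω → T} (h : ∀ ω ω', Y ω = Y ω' ↔ Z ω = Z ω') (ω : Ω) :
    pr p Y (Y ω) = pr p Z (Z ω) :=
  Finset.sum_congr rfl fun ω' _ => by simp only [h ω' ω]

lemma ent_congr [Fintype S] [Fintype T] {Y : Ω → S} {Z : Ω → T}
    (h : ∀ ω ω', Y ω = Y ω' ↔ Z ω = Z ω') : ent p Y = ent p Z := by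
  simp only [ent_eq_neg_sum_mul_logb_pr_apply, pr_apply_congr p h]

lemma ent_eq_ent_restrict {n : ℕ} {m : Fin n → ℕ} {T : Type} [Fintype T] [DecidableEq T]
    (p : (∀ i, Fin (m i)) → ℝ) (A : Finset (Fin n)) (V : (∀ i, Fin (m i)) → T)
    (hV : ∀ x y, V x = V y ↔ ∀ i ∈ A, x i = y i) :
    ent p V = ent p (fun x (i : A) => x i.1) :=
  ent_congr p fun x y => (hV x y).trans (by simp [funext_iff])

end Entropy

-- `q * klFun (w / q) = w * log (w / q) + q - w` is nonnegative and vanishes only at `w = q`.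
open InformationTheory in
lemma eq_of_sum_mul_log_div_nonpos {ι : Type*} [Fintype ι] {w q : ι → ℝ}
    (hw : ∀ i, 0 ≤ w i) (hq : ∀ i, 0 ≤ q i) (hwq : ∀ i, 0 < w i → 0 < q i)
    (hsum : ∑ i, q i ≤ ∑ i, w i) (h : ∑ i, w i * Real.log (w i / q i) ≤ 0) : w = q := by
  have hw_of_hq : ∀ i, q i = 0 → w i = 0 := fun i hqi =>
    (hw i).eq_or_lt.elim Eq.symm fun hwi => absurd hqi (hwq i hwi).ne'
  have hterm : ∀ i, q i * klFun (w i / q i) = w i * Real.log (w i / q i) + q i - w i := by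
    intro i
    rcases (hq i).eq_or_lt with hqi | hqi
    · simp [← hqi, hw_of_hq i hqi.symm]
    · rw [klFun_apply]
      field_simp
  have hnonneg : ∀ i ∈ Finset.univ, 0 ≤ q i * klFun (w i / q i) :=
    fun i _ => mul_nonneg (hq i) (klFun_nonneg (div_nonneg (hw i) (hq i)))
  have hzero : ∑ i, q i * klFun (w i / q i) = 0 := by
    refine le_antisymm ?_ (Finset.sum_nonneg hnonneg)
    simp only [hterm, Finset.sum_sub_distrib, Finset.sum_add_distrib]
    linarith
  funext i
  have hi := (Finset.sum_eq_zero_iff_of_nonneg hnonneg).1 hzero i (Finset.mem_univ i)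
  rcases (hq i).eq_or_lt with hqi | hqi
  · rw [← hqi, hw_of_hq i hqi.symm]
  · rw [mul_eq_zero, klFun_eq_zero_iff (div_nonneg (hw i) hqi.le), div_eq_one_iff_eq hqi.ne'] at hi
    exact hi.resolve_left hqi.ne'

section Information

variable {Ω : Type} [Fintype Ω] {S T : Type} [DecidableEq S] [DecidableEq T] [Fintype S]
  [Fintype T] (p : Ω → ℝ)

lemma pr_pair_eq_mul_of_ent_pair_eq_add (hp0 : ∀ ω, 0 ≤ p ω) (hp1 : ∑ ω, p ω = 1)
    (Y : Ω → S) (Z : Ω → T) (h : ent p (fun ω => (Y ω, Z ω)) = ent p Y + ent p Z) (s : S)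
    (t : T) : pr p (fun ω => (Y ω, Z ω)) (s, t) = pr p Y s * pr p Z t := by
  set W : Ω → S × T := fun ω => (Y ω, Z ω)
  set q : S × T → ℝ := fun st => pr p Y st.1 * pr p Z st.2 with hq
  have hWY : ∀ st, pr p W st ≤ pr p Y st.1 := pr_le_pr_comp p hp0 W Prod.fst
  have hWZ : ∀ st, pr p W st ≤ pr p Z st.2 := pr_le_pr_comp p hp0 W Prod.snd
  have hWq : ∀ st, 0 < pr p W st → 0 < q st :=
    fun st h => mul_pos (h.trans_le (hWY st)) (h.trans_le (hWZ st))
  have hlogb : ∑ st, pr p W st * Real.logb 2 (pr p W st / q st) = 0 := by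
    have hY : ent p Y = -∑ st, pr p W st * Real.logb 2 (pr p Y st.1) := by
      rw [ent_eq_neg_sum_mul_logb_pr_apply,
        ← sum_mul_comp_eq_sum_pr_mul p W fun st => Real.logb 2 (pr p Y st.1)]
    have hZ : ent p Z = -∑ st, pr p W st * Real.logb 2 (pr p Z st.2) := by
      rw [ent_eq_neg_sum_mul_logb_pr_apply,
        ← sum_mul_comp_eq_sum_pr_mul p W fun st => Real.logb 2 (pr p Z st.2)]
    rw [ent_eq_neg_sum, hY, hZ] at h
    calc ∑ st, pr p W st * Real.logb 2 (pr p W st / q st)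
        = ∑ st, (pr p W st * Real.logb 2 (pr p W st) - pr p W st * Real.logb 2 (pr p Y st.1)
            - pr p W st * Real.logb 2 (pr p Z st.2)) := by
          refine Finset.sum_congr rfl fun st _ => ?_
          rcases (pr_nonneg p hp0 W st).eq_or_lt with h0 | h0
          · simp [← h0]
          · have hq0 := hWq st h0
            rw [Real.logb_div h0.ne' hq0.ne', hq,
              Real.logb_mul (h0.trans_le (hWY st)).ne' (h0.trans_le (hWZ st)).ne']
            ring
      _ = 0 := by simp only [Finset.sum_sub_distrib]; linarith
  have hlog : ∑ st, pr p W st * Real.log (pr p W st / q st) = 0 := by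
    simp only [Real.logb, mul_div_assoc', ← Finset.sum_div, div_eq_zero_iff] at hlogb
    exact hlogb.resolve_right (Real.log_pos one_lt_two).ne'
  have hq1 : ∑ st, q st = 1 := by
    rw [Fintype.sum_prod_type, ← Fintype.sum_mul_sum, sum_pr_eq_one p hp1 Y,
      sum_pr_eq_one p hp1 Z, one_mul]
  have hWeq : pr p W = q := eq_of_sum_mul_log_div_nonpos (pr_nonneg p hp0 W)
    (fun st => mul_nonneg (pr_nonneg p hp0 Y _) (pr_nonneg p hp0 Z _)) hWq
    (by rw [hq1, sum_pr_eq_one p hp1 W]) hlog.le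
  exact congrFun hWeq (s, t)

lemma pr_comp_apply_eq_of_ent_comp_eq (hp0 : ∀ ω, 0 ≤ p ω) (V : Ω → S) (f : S → T)
    (h : ent p (f ∘ V) = ent p V) {ω : Ω} (hω : 0 < p ω) :
    pr p (f ∘ V) (f (V ω)) = pr p V (V ω) := by
  have hle : ∀ ω ∈ Finset.univ, p ω * Real.logb 2 (pr p V (V ω))
      ≤ p ω * Real.logb 2 (pr p (f ∘ V) (f (V ω))) := by
    intro ω _
    rcases (hp0 ω).eq_or_lt with h0 | h0
    · simp [← h0]
    · exact mul_le_mul_of_nonneg_left (Real.logb_le_logb_of_le one_lt_two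
        (h0.trans_le (le_pr_apply p hp0 V ω)) (pr_le_pr_comp p hp0 V f _)) h0.le
  rw [ent_eq_neg_sum_mul_logb_pr_apply, ent_eq_neg_sum_mul_logb_pr_apply, neg_inj] at h
  have hlogb := (Finset.sum_eq_sum_iff_of_le hle).1 h.symm ω (Finset.mem_univ ω)
  have hpos : 0 < pr p V (V ω) := hω.trans_le (le_pr_apply p hp0 V ω)
  exact (Real.logb_injOn_pos one_lt_two hpos (hpos.trans_le (pr_le_pr_comp p hp0 V f _))
    (mul_left_cancel₀ hω.ne' hlogb)).symm

end Information

section Face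

variable {Ω : Type} [Fintype Ω] {R S T : Type} [DecidableEq R] [DecidableEq S] [DecidableEq T]
  [Fintype R] [Fintype S] [Fintype T] (p : Ω → ℝ)

lemma exists_ent_eq_logb_natCast_of_pr_eq (hp0 : ∀ ω, 0 ≤ p ω) (hp1 : ∑ ω, p ω = 1)
    (Y : Ω → S) (c : ℝ) (h : ∀ s, 0 < pr p Y s → pr p Y s = c) :
    ∃ k : ℕ, 0 < k ∧ ent p Y = Real.logb 2 k := by
  set F := Finset.univ.filter fun s => 0 < pr p Y s
  have hF : ∀ f : ℝ → ℝ, f 0 = 0 → ∑ s, f (pr p Y s) = #F * f c := by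
    intro f hf0
    rw [← Finset.sum_filter_of_ne (p := fun s => 0 < pr p Y s),
      Finset.sum_congr rfl fun s hs => by rw [h s (Finset.mem_filter.1 hs).2],
      Finset.sum_const, nsmul_eq_mul]
    intro s _ hne
    exact (pr_nonneg p hp0 Y s).lt_of_ne' fun h0 => hne (by rw [h0, hf0])
  have hc : (#F : ℝ) * c = 1 := by
    simpa using (hF id rfl).symm.trans (sum_pr_eq_one p hp1 Y)
  refine ⟨#F, Nat.pos_of_ne_zero fun h0 => by simp [h0] at hc, ?_⟩
  rw [ent_eq_neg_sum, hF (fun x => x * Real.logb 2 x) (by simp), ← mul_assoc, hc, one_mul,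
    eq_inv_of_mul_eq_one_right hc, Real.logb_inv, neg_neg]

lemma pr_eq_pr_of_pairwise_indep_of_mutually_determined (hp0 : ∀ ω, 0 ≤ p ω)
    (hp1 : ∑ ω, p ω = 1) (X : Ω → R) (Y : Ω → S) (Z : Ω → T)
    (hYZ : ent p (fun ω => (Y ω, Z ω)) = ent p Y + ent p Z)
    (hXY : ent p (fun ω => (X ω, Y ω)) = ent p X + ent p Y)
    (hXZ : ent p (fun ω => (X ω, Z ω)) = ent p X + ent p Z)
    (hXY_Z : ent p (fun ω => (X ω, Y ω)) = ent p (fun ω => ((X ω, Y ω), Z ω)))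
    (hXZ_Y : ent p (fun ω => (X ω, Z ω)) = ent p (fun ω => ((X ω, Y ω), Z ω)))
    {s : S} {t : T} (hs : 0 < pr p Y s) (ht : 0 < pr p Z t) : pr p Y s = pr p Z t := by
  have hst : 0 < pr p (fun ω => (Y ω, Z ω)) (s, t) := by
    rw [pr_pair_eq_mul_of_ent_pair_eq_add p hp0 hp1 Y Z hYZ]
    exact mul_pos hs ht
  obtain ⟨ω, hω, hpω⟩ := exists_eq_and_pos_of_pr_pos p hst
  obtain ⟨rfl, rfl⟩ := Prod.mk.inj hω
  set V := fun ω => ((X ω, Y ω), Z ω)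
  have hXYV : pr p (fun ω => (X ω, Y ω)) (X ω, Y ω) = pr p V (V ω) :=
    pr_comp_apply_eq_of_ent_comp_eq p hp0 V Prod.fst hXY_Z hpω
  have hXZV : pr p (fun ω => (X ω, Z ω)) (X ω, Z ω) = pr p V (V ω) :=
    pr_comp_apply_eq_of_ent_comp_eq p hp0 V (fun v => (v.1.1, v.2)) hXZ_Y hpω
  refine mul_left_cancel₀ (hpω.trans_le (le_pr_apply p hp0 X ω)).ne' ?_
  rw [← pr_pair_eq_mul_of_ent_pair_eq_add p hp0 hp1 X Y hXY,
    ← pr_pair_eq_mul_of_ent_pair_eq_add p hp0 hp1 X Z hXZ, hXYV, hXZV]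

end Face

theorem face_U123_23_U1_11_only_if_general (a b : ℝ)
    (hent : IsEntropic 4
      (fun A => a * rkU 2 ({0,1,2} : Finset (Fin 4)) A +
                b * rkU 1 ({0} : Finset (Fin 4)) A)) :
    ∃ k : ℕ, 0 < k ∧ a = Real.logb 2 k := by
  obtain ⟨m, p, hp0, hp1, hA⟩ := hent
  have h0 : ent p (fun x => x 0) = a + b := by
    rw [ent_eq_ent_restrict p {0} _ (by simp), ← hA]; simp [rkU]
  have h1 : ent p (fun x => x 1) = a := by
    rw [ent_eq_ent_restrict p {1} _ (by simp), ← hA]; simp [rkU]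
  have h2 : ent p (fun x => x 2) = a := by
    rw [ent_eq_ent_restrict p {2} _ (by simp), ← hA]; simp [rkU]
  have h01 : ent p (fun x => (x 0, x 1)) = 2 * a + b := by
    rw [ent_eq_ent_restrict p {0, 1} _ (by simp), ← hA]; simp [rkU, mul_comm]
  have h02 : ent p (fun x => (x 0, x 2)) = 2 * a + b := by
    rw [ent_eq_ent_restrict p {0, 2} _ (by simp), ← hA]; simp [rkU, mul_comm]
  have h12 : ent p (fun x => (x 1, x 2)) = 2 * a := by
    rw [ent_eq_ent_restrict p {1, 2} _ (by simp), ← hA]; simp [rkU, mul_comm]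
  have h012 : ent p (fun x => ((x 0, x 1), x 2)) = 2 * a + b := by
    rw [ent_eq_ent_restrict p {0, 1, 2} _ (by simp [and_assoc]), ← hA]
    simp [rkU, mul_comm, min_eq_left (by norm_num : (2 : ℝ) ≤ 3)]
  obtain ⟨t, ht⟩ := exists_pr_pos p hp1 fun x => x 2
  obtain ⟨k, hk, hlog⟩ := exists_ent_eq_logb_natCast_of_pr_eq p hp0 hp1 (fun x => x 1) _
    fun s hs => pr_eq_pr_of_pairwise_indep_of_mutually_determined p hp0 hp1
      (fun x => x 0) (fun x => x 1) (fun x => x 2) (by rw [h12, h1, h2]; ring)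
      (by rw [h01, h0, h1]; ring) (by rw [h02, h0, h2]; ring) (by rw [h01, h012])
      (by rw [h02, h012]) hs ht
  exact ⟨k, hk, h1.symm.trans hlog⟩

/-- If h = a·r(U^{123}_{2,3}) + b·r(U^{1}_{1,1}) is entropic (a, b ≥ 0), then
a = log₂ k for some positive integer k. (Only-if part of Theorem 3 for the
face (U^{123}_{2,3}, U^{1}_{1,1}).) -/
theorem face_U123_23_U1_11_only_if (a b : ℝ) (ha : 0 ≤ a) (hb : 0 ≤ b)
    (hent : IsEntropic 4
      (fun A => a * rkU 2 ({0,1,2} : Finset (Fin 4)) A +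
                b * rkU 1 ({0} : Finset (Fin 4)) A)) :
    ∃ k : ℕ, 0 < k ∧ a = Real.logb 2 k :=
  face_U123_23_U1_11_only_if_general a b hent
end

section
/- Let h = a·r₁ + b·r₂ where r₁ and r₂ are the rank functions of U^{123}_{2,3} and U^{124}_{2,3} on N_4, with a, b ≥ 0. Then h is entropic if and only if a = log k₁ and b = log k₂ for some positive integers k₁, k₂. -/
open Finset

/-!
If `h = a r₁ + b r₂` is the entropy function of `(X₀, X₁, X₂, X₃)`, its values force the
independences `X₀ ⊥ X₁`, `X₁ ⊥ X₂X₃`, `X₂ ⊥ X₃`, `X₂ ⊥ X₀X₃`, `X₃ ⊥ X₀X₂` (entropy is additive)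
and make `X₀X₁` and `X₁X₂X₃` determine the whole vector (entropy does not grow). On the support
this gives `P(x₀) P(x₁) = P(x₁) P(x₂) P(x₃)`, i.e. `P(x₀) = P(x₂) P(x₃)`; since the independences
let `x₂` (resp. `x₃`) vary freely with `(x₀, x₃)` (resp. `(x₀, x₂)`) fixed, `P(x₂)` and `P(x₃)`
are constant on the support. So `X₂`, `X₃` are uniform on `k₁`, `k₂` values and
`a = H(X₂) = log k₁`, `b = H(X₃) = log k₂`.

Conversely, with `U, V` uniform and independent in `ℤ/k₁ × ℤ/k₂`, the vector
`(U, V, U₁ + V₁, U₂ + V₂)` realizes `log k₁ · r₁ + log k₂ · r₂`.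
-/

namespace EntropicFace

lemma ent_eq_neg_sum_logb_pr {Ω S : Type} [Fintype Ω] [DecidableEq S] (p : Ω → ℝ) (Y : Ω → S) :
    ent p Y = -∑ ω, p ω * Real.logb 2 (pr p Y (Y ω)) := by
  rw [ent, ← sum_fiberwise_of_maps_to (g := Y) (fun ω _ => mem_image_of_mem Y (mem_univ ω))]
  refine congrArg _ (sum_congr rfl fun s _ => ?_)
  rw [pr, ← sum_filter, sum_mul]
  exact sum_congr rfl fun ω hω => by rw [(mem_filter.1 hω).2, pr, sum_filter]

lemma card_support_mul_eq_one {α : Type} [Fintype α] {q : α → ℝ} (hq1 : ∑ z, q z = 1) {c : ℝ}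
    (hc : ∀ z, q z ≠ 0 → q z = c) : (#{z | q z ≠ 0} : ℝ) * c = 1 := by
  rw [← hq1, ← sum_filter_ne_zero, sum_congr rfl fun z hz => hc z (mem_filter.1 hz).2,
    sum_const, nsmul_eq_mul]

lemma mul_log_div_le_sub {x y : ℝ} (hx : 0 < x) (hy : 0 < y) : x * Real.log (y / x) ≤ y - x := by
  have := mul_le_mul_of_nonneg_left (Real.log_le_sub_one_of_pos (div_pos hy hx)) hx.le
  rwa [mul_sub, mul_div_cancel₀ _ hx.ne', mul_one] at this

lemma eq_of_mul_log_div_eq_sub {x y : ℝ} (hx : 0 < x) (hy : 0 < y)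
    (h : x * Real.log (y / x) = y - x) : y = x := by
  by_contra hne
  have := mul_lt_mul_of_pos_left
    (Real.log_lt_sub_one_of_pos (div_pos hy hx) (div_ne_one_of_ne hne)) hx
  rw [mul_sub, mul_div_cancel₀ _ hx.ne', mul_one] at this
  exact this.ne h

section Marginals

variable {n : ℕ} {m : Fin n → ℕ}

noncomputable def marg (p : (∀ i, Fin (m i)) → ℝ) (A : Finset (Fin n)) (ω : ∀ i, Fin (m i)) : ℝ :=
  ∑ ω', if ∀ i ∈ A, ω' i = ω i then p ω' else 0

noncomputable def jointEnt (p : (∀ i, Fin (m i)) → ℝ) (A : Finset (Fin n)) : ℝ :=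
  -∑ ω, p ω * Real.logb 2 (marg p A ω)

lemma ent_restrict_eq_jointEnt (p : (∀ i, Fin (m i)) → ℝ) (A : Finset (Fin n)) :
    ent p (fun x (i : A) => x i.1) = jointEnt p A := by
  rw [ent_eq_neg_sum_logb_pr, jointEnt]
  refine congrArg _ (sum_congr rfl fun ω _ => ?_)
  refine congrArg (fun x => p ω * Real.logb 2 x) (sum_congr rfl fun ω' _ => if_congr ?_ rfl rfl)
  simp only [funext_iff, Subtype.forall]

lemma jointEnt_eq_neg_sum_log_div (p : (∀ i, Fin (m i)) → ℝ) (A : Finset (Fin n)) :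
    jointEnt p A = -(∑ ω, p ω * Real.log (marg p A ω)) / Real.log 2 := by
  simp_rw [jointEnt, Real.logb, mul_div_assoc', ← sum_div, neg_div]

lemma marg_congr (p : (∀ i, Fin (m i)) → ℝ) {A S : Finset (Fin n)} (hAS : A ⊆ S)
    {ω ω' : ∀ i, Fin (m i)} (h : ∀ i ∈ S, ω i = ω' i) : marg p A ω = marg p A ω' := by
  refine sum_congr rfl fun x _ => if_congr ?_ rfl rfl
  exact forall₂_congr fun i hi => by rw [h i (hAS hi)]

lemma marg_singleton (p : (∀ i, Fin (m i)) → ℝ) (i : Fin n) (ω : ∀ i, Fin (m i)) :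
    marg p {i} ω = pr p (fun x => x i) (ω i) := by
  simp only [marg, pr, mem_singleton, forall_eq]

lemma card_agree (S : Finset (Fin n)) (σ : ∀ i, Fin (m i)) :
    #{ω : ∀ i, Fin (m i) | ∀ i ∈ S, σ i = ω i} = ∏ i ∈ Sᶜ, m i := by
  have : ({ω | ∀ i ∈ S, σ i = ω i} : Finset (∀ i, Fin (m i))) =
      Fintype.piFinset fun i => if i ∈ S then {σ i} else univ := by
    ext ω
    simp only [mem_filter, mem_univ, true_and, Fintype.mem_piFinset]
    refine forall_congr' fun i => ?_
    split_ifs with hi <;> simp [hi, eq_comm]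
  rw [this, Fintype.card_piFinset, ← prod_mul_prod_compl S]
  rw [prod_congr rfl fun i hi => by rw [if_pos hi, card_singleton], prod_const_one, one_mul]
  exact prod_congr rfl fun i hi => by rw [if_neg (mem_compl.1 hi), card_univ, Fintype.card_fin]

lemma card_agree_union {A B : Finset (Fin n)} (hd : Disjoint A B) (σ τ : ∀ i, Fin (m i)) :
    #{ω : ∀ i, Fin (m i) | (∀ i ∈ A, σ i = ω i) ∧ ∀ i ∈ B, τ i = ω i} = ∏ i ∈ (A ∪ B)ᶜ, m i := by
  rw [← card_agree (A ∪ B) fun i => if i ∈ A then σ i else τ i]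
  congr 1
  ext ω
  simp only [mem_filter, mem_univ, true_and, mem_union, or_imp, forall_and]
  exact and_congr (forall₂_congr fun i hi => by rw [if_pos hi])
    (forall₂_congr fun i hi => by rw [if_neg (disjoint_right.1 hd hi)])

lemma sum_marg_mul_of_agree (p : (∀ i, Fin (m i)) → ℝ) (S : Finset (Fin n))
    {g : (∀ i, Fin (m i)) → ℝ} (hg : ∀ ω ω', (∀ i ∈ S, ω i = ω' i) → g ω = g ω') :
    ∑ ω, marg p S ω * g ω = (∏ i ∈ Sᶜ, (m i : ℝ)) * ∑ ω, p ω * g ω := by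
  simp_rw [marg, sum_mul, ite_mul, zero_mul]
  rw [sum_comm, mul_sum]
  refine sum_congr rfl fun ω' _ => ?_
  rw [← sum_filter, sum_congr rfl fun ω hω => by
    rw [hg ω ω' fun i hi => ((mem_filter.1 hω).2 i hi).symm], sum_const, nsmul_eq_mul,
    card_agree, Nat.cast_prod, mul_left_comm]

variable {p : (∀ i, Fin (m i)) → ℝ}

lemma exists_pos_of_sum_eq_one (hp : ∀ x, 0 ≤ p x) (hp1 : ∑ x, p x = 1) : ∃ ω, 0 < p ω := by
  obtain ⟨ω, -, hω⟩ := exists_ne_zero_of_sum_ne_zero (hp1.trans_ne one_ne_zero)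
  exact ⟨ω, (hp ω).lt_of_ne' hω⟩

lemma marg_nonneg (hp : ∀ x, 0 ≤ p x) (A : Finset (Fin n)) (ω : ∀ i, Fin (m i)) :
    0 ≤ marg p A ω :=
  sum_nonneg fun ω' _ => by split_ifs; exacts [hp ω', le_rfl]

lemma marg_pos (hp : ∀ x, 0 ≤ p x) (A : Finset (Fin n)) {ω : ∀ i, Fin (m i)} (hω : 0 < p ω) :
    0 < marg p A ω :=
  hω.trans_le <| by
    simpa [marg] using single_le_sum (fun ω' _ => by split_ifs; exacts [hp ω', le_rfl])
      (mem_univ ω) (f := fun ω' => if ∀ i ∈ A, ω' i = ω i then p ω' else 0)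

lemma marg_anti (hp : ∀ x, 0 ≤ p x) {A B : Finset (Fin n)} (hAB : A ⊆ B) (ω : ∀ i, Fin (m i)) :
    marg p B ω ≤ marg p A ω := by
  refine sum_le_sum fun ω' _ => ?_
  by_cases h : ∀ i ∈ B, ω' i = ω i
  · rw [if_pos h, if_pos fun i hi => h i (hAB hi)]
  · rw [if_neg h]; split_ifs; exacts [hp ω', le_rfl]

lemma sum_marg (hp1 : ∑ x, p x = 1) (S : Finset (Fin n)) :
    ∑ ω, marg p S ω = ∏ i ∈ Sᶜ, (m i : ℝ) := by
  simpa [hp1] using sum_marg_mul_of_agree p S (g := fun _ => 1) fun _ _ _ => rfl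

lemma sum_marg_mul_marg (hp1 : ∑ x, p x = 1) {A B : Finset (Fin n)} (hd : Disjoint A B) :
    ∑ ω, marg p A ω * marg p B ω = ∏ i ∈ (A ∪ B)ᶜ, (m i : ℝ) := by
  simp_rw [marg, sum_mul_sum, ite_zero_mul_ite_zero]
  rw [sum_comm, sum_congr rfl fun _ _ => sum_comm]
  simp_rw [← sum_filter, sum_const, nsmul_eq_mul, card_agree_union hd]
  simp only [← mul_sum, hp1, mul_one, Nat.cast_prod]

/-- `X_B` is a function of `X_A`. -/
lemma marg_eq_of_jointEnt_eq (hp : ∀ x, 0 ≤ p x) {A B : Finset (Fin n)} (hAB : A ⊆ B)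
    (h : jointEnt p A = jointEnt p B) {ω : ∀ i, Fin (m i)} (hω : 0 < p ω) :
    marg p B ω = marg p A ω := by
  have hle : ∀ ω ∈ univ, p ω * Real.log (marg p B ω) ≤ p ω * Real.log (marg p A ω) := by
    intro ω _
    rcases (hp ω).eq_or_lt with h0 | h0
    · simp [← h0]
    · exact mul_le_mul_of_nonneg_left (Real.log_le_log (marg_pos hp B h0) (marg_anti hp hAB ω))
        h0.le
  have hsum : ∑ ω, p ω * Real.log (marg p B ω) = ∑ ω, p ω * Real.log (marg p A ω) := by
    simpa [jointEnt_eq_neg_sum_log_div, (Real.log_pos one_lt_two).ne'] using h.symm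
  have heq := (sum_eq_sum_iff_of_le hle).1 hsum ω (mem_univ ω)
  exact Real.log_injOn_pos (marg_pos hp B hω) (marg_pos hp A hω) (mul_left_cancel₀ hω.ne' heq)

/-- With `q = P(x_A) P(x_B) / P(x_{A∪B})`, Gibbs' inequality bounds `∑ P(x_{A∪B}) log q` by
`∑ (P(x_A) P(x_B) - P(x_{A∪B})) = 0`, while additivity of entropy makes the left side vanish as
well, so the inequality is tight term by term. -/
lemma marg_union_eq_mul_of_jointEnt_add (hp : ∀ x, 0 ≤ p x) (hp1 : ∑ x, p x = 1)
    {A B : Finset (Fin n)} (hd : Disjoint A B)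
    (h : jointEnt p (A ∪ B) = jointEnt p A + jointEnt p B) (ω : ∀ i, Fin (m i)) :
    marg p (A ∪ B) ω = marg p A ω * marg p B ω := by
  set q : (∀ i, Fin (m i)) → ℝ := fun ω => marg p A ω * marg p B ω / marg p (A ∪ B) ω
  have hpos : ∀ {ω}, 0 < marg p (A ∪ B) ω → 0 < marg p A ω * marg p B ω := fun hω =>
    mul_pos (hω.trans_le (marg_anti hp subset_union_left _))
      (hω.trans_le (marg_anti hp subset_union_right _))
  have hle : ∀ ω ∈ univ, marg p (A ∪ B) ω * Real.log (q ω) ≤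
      marg p A ω * marg p B ω - marg p (A ∪ B) ω := by
    intro ω _
    rcases (marg_nonneg hp (A ∪ B) ω).eq_or_lt with h0 | h0
    · simpa [← h0] using mul_nonneg (marg_nonneg hp A ω) (marg_nonneg hp B ω)
    · exact mul_log_div_le_sub h0 (hpos h0)
  have hlog : ∑ ω, p ω * Real.log (q ω) = 0 := by
    have hsplit : ∀ ω, p ω * Real.log (q ω) = p ω * Real.log (marg p A ω) +
        p ω * Real.log (marg p B ω) - p ω * Real.log (marg p (A ∪ B) ω) := by
      intro ω
      rcases (hp ω).eq_or_lt with h0 | h0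
      · simp [← h0]
      · rw [Real.log_div (hpos (marg_pos hp _ h0)).ne' (marg_pos hp _ h0).ne',
          Real.log_mul (marg_pos hp A h0).ne' (marg_pos hp B h0).ne']
        ring
    simp only [jointEnt_eq_neg_sum_log_div] at h
    field_simp at h
    simp only [hsplit, sum_sub_distrib, sum_add_distrib]
    linarith
  have hsum : ∑ ω, marg p (A ∪ B) ω * Real.log (q ω) =
      ∑ ω, (marg p A ω * marg p B ω - marg p (A ∪ B) ω) := by
    rw [sum_marg_mul_of_agree p (A ∪ B) fun ω ω' hωω' => ?_, hlog, sum_sub_distrib,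
      sum_marg_mul_marg hp1 hd, sum_marg hp1, mul_zero, sub_self]
    simp only [q, marg_congr p subset_union_left hωω', marg_congr p subset_union_right hωω',
      marg_congr p subset_rfl hωω']
  have htight := (sum_eq_sum_iff_of_le hle).1 hsum ω (mem_univ ω)
  rcases (marg_nonneg hp (A ∪ B) ω).eq_or_lt with h0 | h0
  · simp only [← h0, zero_mul, sub_zero] at htight
    rw [← h0, ← htight]
  · exact (eq_of_mul_log_div_eq_sub h0 (hpos h0) htight).symm

lemma exists_pos_agree_of_marg_union_eq_mul (hp : ∀ x, 0 ≤ p x) {A B : Finset (Fin n)}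
    (hd : Disjoint A B) (hind : ∀ ω, marg p (A ∪ B) ω = marg p A ω * marg p B ω)
    {ω ω' : ∀ i, Fin (m i)} (hω : 0 < p ω) (hω' : 0 < p ω') :
    ∃ ω'', 0 < p ω'' ∧ (∀ i ∈ A, ω'' i = ω i) ∧ ∀ i ∈ B, ω'' i = ω' i := by
  set σ : ∀ i, Fin (m i) := fun i => if i ∈ A then ω i else ω' i
  have hσA : ∀ i ∈ A, σ i = ω i := fun i hi => if_pos hi
  have hσB : ∀ i ∈ B, σ i = ω' i := fun i hi => if_neg (disjoint_right.1 hd hi)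
  have hpos : 0 < marg p (A ∪ B) σ := by
    rw [hind, marg_congr p subset_rfl hσA, marg_congr p subset_rfl hσB]
    exact mul_pos (marg_pos hp A hω) (marg_pos hp B hω')
  obtain ⟨ω'', -, hne⟩ := exists_ne_zero_of_sum_ne_zero hpos.ne'
  by_cases hagree : ∀ i ∈ A ∪ B, ω'' i = σ i
  · rw [if_pos hagree] at hne
    refine ⟨ω'', (hp ω'').lt_of_ne' hne, fun i hi => ?_, fun i hi => ?_⟩
    · rw [hagree i (mem_union_left B hi), hσA i hi]
    · rw [hagree i (mem_union_right A hi), hσB i hi]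
  · exact absurd (if_neg hagree) hne

/-- The values of `X_i` can be recombined freely with a fixed value of `(X_k, X_j)`. -/
lemma marg_singleton_eq_of_marg_eq_mul (hp : ∀ x, 0 ≤ p x) {i j k : Fin n}
    (hd : Disjoint ({k, j} : Finset (Fin n)) {i})
    (hkey : ∀ ω, 0 < p ω → marg p {k} ω = marg p {i} ω * marg p {j} ω)
    (hind : ∀ ω, marg p ({k, j} ∪ {i}) ω = marg p {k, j} ω * marg p {i} ω)
    {ω ω' : ∀ i, Fin (m i)} (hω : 0 < p ω) (hω' : 0 < p ω') :
    marg p {i} ω = marg p {i} ω' := by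
  obtain ⟨ω'', hω'', hkj, hi⟩ := exists_pos_agree_of_marg_union_eq_mul hp hd hind hω hω'
  have := hkey ω'' hω''
  rw [marg_congr p (A := {k}) (by simp) hkj, marg_congr p (A := {j}) (by simp) hkj,
    marg_congr p subset_rfl hi, hkey ω hω] at this
  exact mul_right_cancel₀ (marg_pos hp {j} hω).ne' this

lemma exists_jointEnt_singleton_eq_logb (hp : ∀ x, 0 ≤ p x) (hp1 : ∑ x, p x = 1) (i : Fin n)
    (hconst : ∀ ω ω', 0 < p ω → 0 < p ω' → marg p {i} ω = marg p {i} ω') :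
    ∃ k : ℕ, 0 < k ∧ jointEnt p {i} = Real.logb 2 k := by
  obtain ⟨ω₀, hω₀⟩ := exists_pos_of_sum_eq_one hp hp1
  have hq1 : ∑ z, pr p (fun x => x i) z = 1 := by
    rw [← hp1]
    simp only [pr]
    rw [sum_comm]
    simp only [sum_ite_eq, mem_univ, if_true]
  have hq : ∀ z, pr p (fun x => x i) z ≠ 0 → pr p (fun x => x i) z = marg p {i} ω₀ := by
    intro z hz
    obtain ⟨ω, -, hne⟩ := exists_ne_zero_of_sum_ne_zero hz
    have hωz : ω i = z := by by_contra h; exact hne (if_neg h)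
    rw [if_pos hωz] at hne
    rw [← hωz, ← marg_singleton, hconst ω ω₀ ((hp ω).lt_of_ne' hne) hω₀]
  have hk := card_support_mul_eq_one hq1 hq
  refine ⟨#{z | pr p (fun x => x i) z ≠ 0}, Nat.pos_of_ne_zero fun h0 => by simp [h0] at hk, ?_⟩
  have hsupp : ∀ ω, p ω * Real.logb 2 (marg p {i} ω) = p ω * Real.logb 2 (marg p {i} ω₀) := by
    intro ω
    rcases (hp ω).eq_or_lt with h0 | h0
    · simp [← h0]
    · rw [hconst ω ω₀ h0 hω₀]
  rw [jointEnt, sum_congr rfl fun ω _ => hsupp ω, ← sum_mul, hp1, one_mul,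
    eq_inv_of_mul_eq_one_right hk, Real.logb_inv, neg_neg]

end Marginals

lemma rkU_eq_natCast (k : ℕ) (B A : Finset (Fin 4)) : rkU k B A = (min k #(A ∩ B) : ℕ) := by
  rw [rkU, Nat.cast_min]

section Forward

variable {m : Fin 4 → ℕ} {p : (∀ i, Fin (m i)) → ℝ} {a b : ℝ}

lemma jointEnt_union_eq_add_of_face
    (hH : ∀ A, jointEnt p A = a * rkU 2 {0,1,2} A + b * rkU 2 {0,1,3} A) {A B : Finset (Fin 4)}
    (h₁ : min 2 #((A ∪ B) ∩ {0,1,2}) = min 2 #(A ∩ {0,1,2}) + min 2 #(B ∩ {0,1,2}))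
    (h₂ : min 2 #((A ∪ B) ∩ {0,1,3}) = min 2 #(A ∩ {0,1,3}) + min 2 #(B ∩ {0,1,3})) :
    jointEnt p (A ∪ B) = jointEnt p A + jointEnt p B := by
  simp only [hH, rkU_eq_natCast, h₁, h₂, Nat.cast_add]
  ring

lemma jointEnt_eq_of_face
    (hH : ∀ A, jointEnt p A = a * rkU 2 {0,1,2} A + b * rkU 2 {0,1,3} A) {A B : Finset (Fin 4)}
    (h₁ : min 2 #(A ∩ {0,1,2}) = min 2 #(B ∩ {0,1,2}))
    (h₂ : min 2 #(A ∩ {0,1,3}) = min 2 #(B ∩ {0,1,3})) :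
    jointEnt p A = jointEnt p B := by
  simp only [hH, rkU_eq_natCast, h₁, h₂]

/-- Both `P(x₀) P(x₁)` and `P(x₁) P(x₂) P(x₃)` equal `P(x₀, x₁, x₂, x₃)`, since `X₀ ⊥ X₁`,
`X₁ ⊥ X₂X₃`, `X₂ ⊥ X₃` and both `X₀X₁` and `X₁X₂X₃` determine the whole vector. -/
lemma marg_zero_eq_mul_of_face (hp : ∀ x, 0 ≤ p x) (hp1 : ∑ x, p x = 1)
    (hH : ∀ A, jointEnt p A = a * rkU 2 {0,1,2} A + b * rkU 2 {0,1,3} A)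
    {ω : ∀ i, Fin (m i)} (hω : 0 < p ω) :
    marg p {0} ω = marg p {2} ω * marg p {3} ω := by
  have I01 := marg_union_eq_mul_of_jointEnt_add hp hp1 (A := {0}) (B := {1}) (by decide)
    (jointEnt_union_eq_add_of_face hH (by decide) (by decide)) ω
  have I23 := marg_union_eq_mul_of_jointEnt_add hp hp1 (A := {2}) (B := {3}) (by decide)
    (jointEnt_union_eq_add_of_face hH (by decide) (by decide)) ω
  have I123 := marg_union_eq_mul_of_jointEnt_add hp hp1 (A := {1}) (B := {2} ∪ {3})
    (by decide) (jointEnt_union_eq_add_of_face hH (by decide) (by decide)) ω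
  have D01 := marg_eq_of_jointEnt_eq hp (A := {0} ∪ {1}) (subset_univ _)
    (jointEnt_eq_of_face hH (by decide) (by decide)) hω
  have D123 := marg_eq_of_jointEnt_eq hp (A := {1} ∪ ({2} ∪ {3})) (subset_univ _)
    (jointEnt_eq_of_face hH (by decide) (by decide)) hω
  refine mul_right_cancel₀ (marg_pos hp {1} hω).ne' ?_
  rw [← I01, ← D01, D123, I123, I23]
  ring

theorem exists_logb_of_isEntropic_face
    (h : IsEntropic 4 fun A => a * rkU 2 {0,1,2} A + b * rkU 2 {0,1,3} A) :
    ∃ k₁ k₂ : ℕ, 0 < k₁ ∧ 0 < k₂ ∧ a = Real.logb 2 k₁ ∧ b = Real.logb 2 k₂ := by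
  obtain ⟨m, p, hp, hp1, hent⟩ := h
  have hH : ∀ A, jointEnt p A = a * rkU 2 {0,1,2} A + b * rkU 2 {0,1,3} A := fun A => by
    rw [← ent_restrict_eq_jointEnt, ← hent]
  have hkey := fun ω (hω : 0 < p ω) => marg_zero_eq_mul_of_face hp hp1 hH hω
  obtain ⟨k₁, hk₁, h₂⟩ := exists_jointEnt_singleton_eq_logb hp hp1 2 fun _ _ =>
    marg_singleton_eq_of_marg_eq_mul hp (k := 0) (j := 3) (by decide) hkey
      (marg_union_eq_mul_of_jointEnt_add hp hp1 (by decide)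
        (jointEnt_union_eq_add_of_face hH (by decide) (by decide)))
  obtain ⟨k₂, hk₂, h₃⟩ := exists_jointEnt_singleton_eq_logb hp hp1 3 fun _ _ =>
    marg_singleton_eq_of_marg_eq_mul hp (k := 0) (j := 2) (by decide)
      (fun ω hω => (hkey ω hω).trans (mul_comm _ _))
      (marg_union_eq_mul_of_jointEnt_add hp hp1 (by decide)
        (jointEnt_union_eq_add_of_face hH (by decide) (by decide)))
  refine ⟨k₁, k₂, hk₁, hk₂, ?_, ?_⟩
  · simpa [hH, rkU_eq_natCast] using h₂
  · simpa [hH, rkU_eq_natCast] using h₃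

end Forward

section UniformPush

variable {n : ℕ} {m : Fin n → ℕ} {T : Type} [Fintype T]

noncomputable def uniformPush (F : T → ∀ i, Fin (m i)) (ω : ∀ i, Fin (m i)) : ℝ :=
  #{t | F t = ω} / Fintype.card T

lemma sum_uniformPush_mul (F : T → ∀ i, Fin (m i)) (g : (∀ i, Fin (m i)) → ℝ) :
    ∑ ω, uniformPush F ω * g ω = (∑ t, g (F t)) / Fintype.card T := by
  simp_rw [uniformPush, div_mul_eq_mul_div, ← sum_div, ← sum_fiberwise' univ F g, sum_const,
    nsmul_eq_mul]

lemma uniformPush_nonneg (F : T → ∀ i, Fin (m i)) (ω : ∀ i, Fin (m i)) : 0 ≤ uniformPush F ω := by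
  unfold uniformPush
  positivity

lemma sum_uniformPush [Nonempty T] (F : T → ∀ i, Fin (m i)) : ∑ ω, uniformPush F ω = 1 := by
  simpa using sum_uniformPush_mul F fun _ => 1

lemma marg_uniformPush (F : T → ∀ i, Fin (m i)) (A : Finset (Fin n)) (t : T) :
    marg (uniformPush F) A (F t) = #{t' | ∀ i ∈ A, F t' i = F t i} / Fintype.card T := by
  have := sum_uniformPush_mul F fun ω => if ∀ i ∈ A, ω i = F t i then 1 else 0
  simp only [mul_ite, mul_one, mul_zero, sum_boole] at this
  rw [marg, this]

lemma jointEnt_uniformPush [Nonempty T] (F : T → ∀ i, Fin (m i)) (A : Finset (Fin n)) {C : ℕ}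
    (hC : ∀ t, #{t' | ∀ i ∈ A, F t' i = F t i} = C) :
    jointEnt (uniformPush F) A = -Real.logb 2 (C / Fintype.card T) := by
  rw [jointEnt, sum_uniformPush_mul F, sum_congr rfl fun t _ => by rw [marg_uniformPush, hC],
    sum_const, card_univ, nsmul_eq_mul, mul_div_cancel_left₀ _ (by positivity)]

end UniformPush

section Counting

lemma card_filter_eq_one {α : Type} [Fintype α] {P : α → Prop} [DecidablePred P] (a : α)
    (h : ∀ z, P z ↔ z = a) : #{z | P z} = 1 :=
  card_eq_one.2 ⟨a, by ext z; simp [h z]⟩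

lemma card_inter_eq_add {α : Type} [DecidableEq α] (A : Finset α) {i j k : α} (hij : i ≠ j)
    (hik : i ≠ k) (hjk : j ≠ k) :
    #(A ∩ {i, j, k}) = (if i ∈ A then 1 else 0) + (if j ∈ A then 1 else 0) +
      (if k ∈ A then 1 else 0) := by
  rw [inter_comm, ← filter_mem_eq_inter, card_filter, sum_insert (by simp [hij, hik]),
    sum_insert (by simp [hjk]), sum_singleton, add_assoc]

variable {G : Type} [Fintype G] [DecidableEq G]

lemma card_filter_fst_eq (x : G) : #{z : G × G | z.1 = x} = Fintype.card G := by
  rw [show ({z : G × G | z.1 = x} : Finset (G × G)) = {x} ×ˢ univ by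
      ext ⟨u, v⟩; simp only [mem_filter, mem_univ, true_and, mem_product, mem_singleton, and_true],
    card_product, card_singleton, one_mul, card_univ]

lemma card_filter_snd_eq (y : G) : #{z : G × G | z.2 = y} = Fintype.card G := by
  rw [show ({z : G × G | z.2 = y} : Finset (G × G)) = univ ×ˢ {y} by
      ext ⟨u, v⟩; simp only [mem_filter, mem_univ, true_and, mem_product, mem_singleton],
    card_product, card_singleton, mul_one, card_univ]

variable [AddCommGroup G]

lemma card_filter_add_eq (c : G) : #{z : G × G | z.1 + z.2 = c} = Fintype.card G := by
  rw [show ({z : G × G | z.1 + z.2 = c} : Finset (G × G)) = univ.image fun w => (w, c - w) by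
      ext ⟨u, v⟩; simp [eq_sub_iff_add_eq', eq_comm],
    card_image_of_injective _ fun _ _ h => (Prod.ext_iff.1 h).1, card_univ]

abbrev AgreeOn (c₀ c₁ c₂ : Prop) (x y : G) (z : G × G) : Prop :=
  (c₀ → z.1 = x) ∧ (c₁ → z.2 = y) ∧ (c₂ → z.1 + z.2 = x + y)

/-- Fixing any two of `u`, `v`, `u + v` fixes `(u, v)`; fixing one leaves `|G|` choices. -/
lemma card_filter_agreeOn (c₀ c₁ c₂ : Prop) [Decidable c₀] [Decidable c₁] [Decidable c₂]
    (x y : G) :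
    #{z : G × G | AgreeOn c₀ c₁ c₂ x y z}
      = Fintype.card G ^ (2 - min 2 ((if c₀ then 1 else 0) + (if c₁ then 1 else 0) +
          (if c₂ then 1 else 0))) := by
  by_cases h₀ : c₀ <;> by_cases h₁ : c₁ <;> by_cases h₂ : c₂ <;>
    simp only [AgreeOn, h₀, h₁, h₂, if_true, if_false, true_implies, false_implies, true_and,
      and_true, Nat.reduceAdd, min_def, Nat.reduceLeDiff, Nat.reduceSub, pow_zero, pow_one]
  · refine card_filter_eq_one (x, y) fun z => ⟨fun h => Prod.ext h.1 h.2.1, ?_⟩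
    rintro rfl; exact ⟨rfl, rfl, rfl⟩
  · exact card_filter_eq_one (x, y) fun z => ⟨fun h => Prod.ext h.1 h.2, fun h => by simp [h]⟩
  · refine card_filter_eq_one (x, y) fun z => ⟨fun ⟨h, h'⟩ => ?_, fun h => by simp [h]⟩
    exact Prod.ext h (add_left_cancel (h ▸ h'))
  · exact card_filter_fst_eq x
  · refine card_filter_eq_one (x, y) fun z => ⟨fun ⟨h, h'⟩ => ?_, fun h => by simp [h]⟩
    exact Prod.ext (add_right_cancel (h ▸ h')) h
  · exact card_filter_snd_eq y
  · exact card_filter_add_eq (x + y)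
  · simp [sq]

lemma card_filter_prod_prod {α β : Type} [Fintype α] [Fintype β] (P : α × α → Prop)
    (Q : β × β → Prop) [DecidablePred P] [DecidablePred Q] :
    #{t : (α × β) × (α × β) | P (t.1.1, t.2.1) ∧ Q (t.1.2, t.2.2)} = #{z | P z} * #{w | Q w} := by
  simp only [← Fintype.card_subtype, ← Fintype.card_prod]
  exact Fintype.card_congr (((Equiv.prodProdProdComm α β α β).subtypeEquiv fun _ => Iff.rfl).trans
    Equiv.subtypeProdEquivProd)

end Counting

lemma forall_mem_fin_four {A : Finset (Fin 4)} {Q : Fin 4 → Prop} :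
    (∀ i ∈ A, Q i) ↔ (0 ∈ A → Q 0) ∧ (1 ∈ A → Q 1) ∧ (2 ∈ A → Q 2) ∧ (3 ∈ A → Q 3) := by
  refine ⟨fun h => ⟨h 0, h 1, h 2, h 3⟩, fun ⟨h₀, h₁, h₂, h₃⟩ i hi => ?_⟩
  fin_cases i
  exacts [h₀ hi, h₁ hi, h₂ hi, h₃ hi]

section Construction

def faceAlphabet (k₁ k₂ : ℕ) : Fin 4 → ℕ := ![k₁ * k₂, k₁ * k₂, k₁, k₂]

/-- With `U = (u₁, u₂)` and `V = (v₁, v₂)` uniform in `(ℤ/k₁ × ℤ/k₂)²`, the variables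
`(U, V, u₁ + v₁, u₂ + v₂)`: on each factor this is the uniform matroid `U_{2,3}`. -/
def faceVars (k₁ k₂ : ℕ) (t : (Fin k₁ × Fin k₂) × (Fin k₁ × Fin k₂)) :
    ∀ i, Fin (faceAlphabet k₁ k₂ i) :=
  Fin.cons (finProdFinEquiv t.1) (Fin.cons (finProdFinEquiv t.2)
    (Fin.cons (t.1.1 + t.2.1) (Fin.cons (t.1.2 + t.2.2) finZeroElim)))

variable (k₁ k₂ : ℕ) [NeZero k₁] [NeZero k₂]

lemma card_faceVars_agree (A : Finset (Fin 4)) (t : (Fin k₁ × Fin k₂) × (Fin k₁ × Fin k₂)) :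
    #{t' | ∀ i ∈ A, faceVars k₁ k₂ t' i = faceVars k₁ k₂ t i} =
      k₁ ^ (2 - min 2 #(A ∩ {0,1,2})) * k₂ ^ (2 - min 2 #(A ∩ {0,1,3})) := by
  have hagree : ∀ t', (∀ i ∈ A, faceVars k₁ k₂ t' i = faceVars k₁ k₂ t i) ↔
      AgreeOn (0 ∈ A) (1 ∈ A) (2 ∈ A) t.1.1 t.2.1 (t'.1.1, t'.2.1) ∧
        AgreeOn (0 ∈ A) (1 ∈ A) (3 ∈ A) t.1.2 t.2.2 (t'.1.2, t'.2.2) := by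
    intro t'
    have h₀ : faceVars k₁ k₂ t' 0 = faceVars k₁ k₂ t 0 ↔ t'.1.1 = t.1.1 ∧ t'.1.2 = t.1.2 :=
      finProdFinEquiv.apply_eq_iff_eq.trans Prod.ext_iff
    have h₁ : faceVars k₁ k₂ t' 1 = faceVars k₁ k₂ t 1 ↔ t'.2.1 = t.2.1 ∧ t'.2.2 = t.2.2 :=
      finProdFinEquiv.apply_eq_iff_eq.trans Prod.ext_iff
    rw [forall_mem_fin_four, h₀, h₁]
    simp only [AgreeOn, imp_and]
    exact ⟨fun ⟨⟨a, b⟩, ⟨c, d⟩, e, f⟩ => ⟨⟨a, c, e⟩, ⟨b, d, f⟩⟩,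
      fun ⟨⟨a, c, e⟩, ⟨b, d, f⟩⟩ => ⟨⟨a, b⟩, ⟨c, d⟩, e, f⟩⟩
  rw [filter_congr fun t' _ => hagree t', card_filter_prod_prod, card_filter_agreeOn,
    card_filter_agreeOn, card_inter_eq_add A (by decide) (by decide) (by decide),
    card_inter_eq_add A (by decide) (by decide) (by decide), Fintype.card_fin, Fintype.card_fin]

end Construction

lemma neg_logb_pow_sub_mul_pow_sub_div {x y : ℕ} (hx : 0 < x) (hy : 0 < y) {r s : ℕ} (hr : r ≤ 2)
    (hs : s ≤ 2) :
    -Real.logb 2 (((x ^ (2 - r) * y ^ (2 - s) : ℕ) : ℝ) / ((x * y * (x * y) : ℕ) : ℝ)) =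
      Real.logb 2 x * r + Real.logb 2 y * s := by
  have hx' : (0 : ℝ) < x := Nat.cast_pos.2 hx
  have hy' : (0 : ℝ) < y := Nat.cast_pos.2 hy
  push_cast
  rw [Real.logb_div (by positivity) (by positivity), Real.logb_mul (by positivity) (by positivity),
    Real.logb_mul (by positivity) (by positivity), Real.logb_mul (by positivity) (by positivity)]
  simp only [Real.logb_pow, Nat.cast_sub hr, Nat.cast_sub hs]
  push_cast
  ring

theorem isEntropic_face_logb {k₁ k₂ : ℕ} (hk₁ : 0 < k₁) (hk₂ : 0 < k₂) :
    IsEntropic 4 fun A => Real.logb 2 k₁ * rkU 2 {0,1,2} A + Real.logb 2 k₂ * rkU 2 {0,1,3} A := by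
  have := NeZero.of_pos hk₁
  have := NeZero.of_pos hk₂
  refine ⟨faceAlphabet k₁ k₂, uniformPush (faceVars k₁ k₂), uniformPush_nonneg _,
    sum_uniformPush _, fun A => ?_⟩
  rw [ent_restrict_eq_jointEnt, jointEnt_uniformPush _ A (card_faceVars_agree k₁ k₂ A)]
  simp only [rkU_eq_natCast, Fintype.card_prod, Fintype.card_fin]
  rw [neg_logb_pow_sub_mul_pow_sub_div hk₁ hk₂ (min_le_left _ _) (min_le_left _ _)]

end EntropicFace

theorem face_U123_23_U124_23_general (a b : ℝ) :
    IsEntropic 4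
      (fun A => a * rkU 2 ({0,1,2} : Finset (Fin 4)) A +
                b * rkU 2 ({0,1,3} : Finset (Fin 4)) A)
    ↔ ∃ k₁ k₂ : ℕ, 0 < k₁ ∧ 0 < k₂ ∧
        a = Real.logb 2 k₁ ∧ b = Real.logb 2 k₂ := by
  refine ⟨EntropicFace.exists_logb_of_isEntropic_face, ?_⟩
  rintro ⟨k₁, k₂, hk₁, hk₂, rfl, rfl⟩
  exact EntropicFace.isEntropic_face_logb hk₁ hk₂

/-- Theorem 5: for the face (U^{123}_{2,3}, U^{124}_{2,3}),
h = a·r₁ + b·r₂ (a, b ≥ 0) is entropic iff a = log₂ k₁ and b = log₂ k₂ for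
positive integers k₁, k₂. -/
theorem face_U123_23_U124_23 (a b : ℝ) (ha : 0 ≤ a) (hb : 0 ≤ b) :
    IsEntropic 4
      (fun A => a * rkU 2 ({0,1,2} : Finset (Fin 4)) A +
                b * rkU 2 ({0,1,3} : Finset (Fin 4)) A)
    ↔ ∃ k₁ k₂ : ℕ, 0 < k₁ ∧ 0 < k₂ ∧
        a = Real.logb 2 k₁ ∧ b = Real.logb 2 k₂ :=
  face_U123_23_U124_23_general a b
end

section
/- Let X₁, X₂, X₃ be random variables on finite alphabets that are pairwise independent and such that each is a deterministic function of the other two. Then X₁, X₂, X₃ are each uniformly distributed on the support of their respective alphabets, and |supp(X₁)| = |supp(X₂)| = |supp(X₃)|. -/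
/-!
When `p(x, y, z) > 0`, pairwise independence turns the three functional dependencies into
`p(x, y, z) = p₁(x) p₂(y) = p₁(x) p₃(z) = p₂(y) p₃(z)`, and cancelling gives
`p₁(x) = p₂(y) = p₃(z)`. Conversely, any atoms `x` of `p₁` and `y` of `p₂` occur together in the
support, since `p₁₂(x, y) = p₁(x) p₂(y) > 0`, and likewise for `p₂` and `p₃`. So all atoms of the
three marginals carry one common mass `c`, and each support has `(total mass) / c` points.
-/

open Finset

/-- Marginal pmfs of a joint pmf on a triple product. -/
noncomputable def marg1 {A B C : Type} [Fintype B] [Fintype C]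
    (p : A × B × C → ℝ) (x : A) : ℝ := ∑ y, ∑ z, p (x, y, z)

noncomputable def marg2 {A B C : Type} [Fintype A] [Fintype C]
    (p : A × B × C → ℝ) (y : B) : ℝ := ∑ x, ∑ z, p (x, y, z)

noncomputable def marg3 {A B C : Type} [Fintype A] [Fintype B]
    (p : A × B × C → ℝ) (z : C) : ℝ := ∑ x, ∑ y, p (x, y, z)

noncomputable def marg12 {A B C : Type} [Fintype C]
    (p : A × B × C → ℝ) (x : A) (y : B) : ℝ := ∑ z, p (x, y, z)

noncomputable def marg13 {A B C : Type} [Fintype B]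
    (p : A × B × C → ℝ) (x : A) (z : C) : ℝ := ∑ y, p (x, y, z)

noncomputable def marg23 {A B C : Type} [Fintype A]
    (p : A × B × C → ℝ) (y : B) (z : C) : ℝ := ∑ x, p (x, y, z)

section PositivePart

variable {ι κ : Type} [Fintype ι] [Fintype κ] {f : ι → ℝ} {g : κ → ℝ}

theorem sum_eq_card_filter_pos_mul {c : ℝ} (hf : ∀ i, 0 ≤ f i)
    (hc : ∀ i, 0 < f i → f i = c) : ∑ i, f i = #{i | 0 < f i} * c := by
  rw [← sum_filter_of_ne fun i _ hi => (hf i).lt_of_ne' hi,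
    sum_eq_card_nsmul fun i hi => hc i (mem_filter.mp hi).2, nsmul_eq_mul]

theorem card_filter_pos_eq_zero_iff (hf : ∀ i, 0 ≤ f i) :
    #{i | 0 < f i} = 0 ↔ ∑ i, f i = 0 := by
  simp only [card_eq_zero, filter_eq_empty_iff, mem_univ, true_implies, not_lt,
    sum_eq_zero_iff_of_nonneg fun i _ => hf i]
  exact forall_congr' fun i => ⟨fun h => le_antisymm h (hf i), le_of_eq⟩

theorem exists_pos_of_sum_pos (h : 0 < ∑ i, f i) : ∃ i, 0 < f i := by
  obtain ⟨i, -, hi⟩ := exists_lt_of_sum_lt (f := fun _ => (0 : ℝ)) (s := univ) (g := f) <| by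
    rwa [sum_const_zero]
  exact ⟨i, hi⟩

theorem eq_of_pos_of_forall_pos_eq (hf : ∀ i, 0 ≤ f i) (hsum : ∑ i, f i = ∑ j, g j)
    (hfg : ∀ i j, 0 < f i → 0 < g j → f i = g j) {i i' : ι} (hi : 0 < f i) (hi' : 0 < f i') :
    f i = f i' := by
  obtain ⟨j, hj⟩ := exists_pos_of_sum_pos <|
    hsum ▸ hi.trans_le (single_le_sum (fun i _ => hf i) (mem_univ i))
  exact (hfg i j hi hj).trans (hfg i' j hi' hj).symm

theorem card_filter_pos_eq_of_forall_pos_eq (hf : ∀ i, 0 ≤ f i) (hg : ∀ j, 0 ≤ g j)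
    (hsum : ∑ i, f i = ∑ j, g j) (hfg : ∀ i j, 0 < f i → 0 < g j → f i = g j) :
    #{i | 0 < f i} = #{j | 0 < g j} := by
  by_cases h0 : ∑ i, f i = 0
  · rw [(card_filter_pos_eq_zero_iff hf).mpr h0, (card_filter_pos_eq_zero_iff hg).mpr (hsum ▸ h0)]
  obtain ⟨i₀, hi₀⟩ := exists_pos_of_sum_pos ((sum_nonneg fun i _ => hf i).lt_of_ne' h0)
  obtain ⟨j₀, hj₀⟩ := exists_pos_of_sum_pos ((sum_nonneg fun j _ => hg j).lt_of_ne' (hsum ▸ h0))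
  have hcard : (#{i | 0 < f i} : ℝ) * f i₀ = #{j | 0 < g j} * f i₀ := by
    rw [← sum_eq_card_filter_pos_mul hf fun i hi => (hfg i j₀ hi hj₀).trans (hfg i₀ j₀ hi₀ hj₀).symm,
      hsum, sum_eq_card_filter_pos_mul hg fun j hj => (hfg i₀ j hi₀ hj).symm]
  exact_mod_cast mul_right_cancel₀ hi₀.ne' hcard

end PositivePart

section Marginals

theorem marg1_nonneg {A B C : Type} [Fintype B] [Fintype C] {p : A × B × C → ℝ}
    (hp : ∀ t, 0 ≤ p t) (x : A) : 0 ≤ marg1 p x :=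
  sum_nonneg fun _ _ => sum_nonneg fun _ _ => hp _

theorem marg2_nonneg {A B C : Type} [Fintype A] [Fintype C] {p : A × B × C → ℝ}
    (hp : ∀ t, 0 ≤ p t) (y : B) : 0 ≤ marg2 p y :=
  sum_nonneg fun _ _ => sum_nonneg fun _ _ => hp _

theorem marg3_nonneg {A B C : Type} [Fintype A] [Fintype B] {p : A × B × C → ℝ}
    (hp : ∀ t, 0 ≤ p t) (z : C) : 0 ≤ marg3 p z :=
  sum_nonneg fun _ _ => sum_nonneg fun _ _ => hp _

variable {A B C : Type} [Fintype A] [Fintype B] [Fintype C] {p : A × B × C → ℝ}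

def PairwiseIndependent (p : A × B × C → ℝ) : Prop :=
  (∀ x y, marg12 p x y = marg1 p x * marg2 p y) ∧
  (∀ x z, marg13 p x z = marg1 p x * marg3 p z) ∧
  (∀ y z, marg23 p y z = marg2 p y * marg3 p z)

def EachFunctionOfOthers (p : A × B × C → ℝ) : Prop :=
  ∀ x y z, 0 < p (x, y, z) →
    p (x, y, z) = marg12 p x y ∧ p (x, y, z) = marg13 p x z ∧ p (x, y, z) = marg23 p y z

theorem sum_marg1_eq_sum_marg2 : ∑ x, marg1 p x = ∑ y, marg2 p y :=
  sum_comm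

theorem sum_marg2_eq_sum_marg3 : ∑ y, marg2 p y = ∑ z, marg3 p z :=
  calc ∑ y, ∑ x, ∑ z, p (x, y, z) = ∑ x, ∑ y, ∑ z, p (x, y, z) := sum_comm
    _ = ∑ x, ∑ z, ∑ y, p (x, y, z) := sum_congr rfl fun _ _ => sum_comm
    _ = ∑ z, ∑ x, ∑ y, p (x, y, z) := sum_comm

theorem marg_eq_of_pos (hind : PairwiseIndependent p) (hfun : EachFunctionOfOthers p)
    {x : A} {y : B} {z : C} (hxyz : 0 < p (x, y, z)) :
    marg1 p x = marg2 p y ∧ marg2 p y = marg3 p z := by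
  obtain ⟨hind12, hind13, hind23⟩ := hind
  obtain ⟨h12, h13, h23⟩ := hfun x y z hxyz
  rw [hind12] at h12
  rw [hind13] at h13
  rw [hind23] at h23
  have hx : marg1 p x ≠ 0 := left_ne_zero_of_mul (h12 ▸ hxyz.ne')
  have hz : marg3 p z ≠ 0 := right_ne_zero_of_mul (h23 ▸ hxyz.ne')
  exact ⟨mul_right_cancel₀ hz (h13.symm.trans h23), mul_left_cancel₀ hx (h12.symm.trans h13)⟩

theorem marg1_eq_marg2_of_pos (hind : PairwiseIndependent p) (hfun : EachFunctionOfOthers p)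
    (x : A) (y : B) (hx : 0 < marg1 p x) (hy : 0 < marg2 p y) : marg1 p x = marg2 p y := by
  obtain ⟨z, hz⟩ := exists_pos_of_sum_pos (hind.1 x y ▸ mul_pos hx hy)
  exact (marg_eq_of_pos hind hfun hz).1

theorem marg2_eq_marg3_of_pos (hind : PairwiseIndependent p) (hfun : EachFunctionOfOthers p)
    (y : B) (z : C) (hy : 0 < marg2 p y) (hz : 0 < marg3 p z) : marg2 p y = marg3 p z := by
  obtain ⟨x, hx⟩ := exists_pos_of_sum_pos (hind.2.2 y z ▸ mul_pos hy hz)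
  exact (marg_eq_of_pos hind hfun hx).2

end Marginals

theorem pairwise_indep_functional_triple_uniform_general
    (m₁ m₂ m₃ : ℕ) (p : Fin m₁ × Fin m₂ × Fin m₃ → ℝ)
    (hp : ∀ x, 0 ≤ p x)
    (hind12 : ∀ x y, marg12 p x y = marg1 p x * marg2 p y)
    (hind13 : ∀ x z, marg13 p x z = marg1 p x * marg3 p z)
    (hind23 : ∀ y z, marg23 p y z = marg2 p y * marg3 p z)
    (hfun : ∀ x y z, 0 < p (x, y, z) →
      p (x, y, z) = marg12 p x y ∧ p (x, y, z) = marg13 p x z ∧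
      p (x, y, z) = marg23 p y z) :
    (∀ x x', 0 < marg1 p x → 0 < marg1 p x' → marg1 p x = marg1 p x') ∧
    (∀ y y', 0 < marg2 p y → 0 < marg2 p y' → marg2 p y = marg2 p y') ∧
    (∀ z z', 0 < marg3 p z → 0 < marg3 p z' → marg3 p z = marg3 p z') ∧
    (Finset.univ.filter fun x => 0 < marg1 p x).card =
      (Finset.univ.filter fun y => 0 < marg2 p y).card ∧
    (Finset.univ.filter fun y => 0 < marg2 p y).card =
      (Finset.univ.filter fun z => 0 < marg3 p z).card := by
  have hind : PairwiseIndependent p := ⟨hind12, hind13, hind23⟩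
  have h12 := marg1_eq_marg2_of_pos hind hfun
  have h21 y x hy hx : marg2 p y = marg1 p x := (h12 x y hx hy).symm
  have h32 z y hz hy : marg3 p z = marg2 p y := (marg2_eq_marg3_of_pos hind hfun y z hy hz).symm
  have s12 := sum_marg1_eq_sum_marg2 (p := p)
  have s32 := (sum_marg2_eq_sum_marg3 (p := p)).symm
  exact ⟨fun _ _ => eq_of_pos_of_forall_pos_eq (marg1_nonneg hp) s12 h12,
    fun _ _ => eq_of_pos_of_forall_pos_eq (marg2_nonneg hp) s12.symm h21,
    fun _ _ => eq_of_pos_of_forall_pos_eq (marg3_nonneg hp) s32 h32,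
    card_filter_pos_eq_of_forall_pos_eq (marg1_nonneg hp) (marg2_nonneg hp) s12 h12,
    (card_filter_pos_eq_of_forall_pos_eq (marg3_nonneg hp) (marg2_nonneg hp) s32 h32).symm⟩

/-- If X₁, X₂, X₃ are pairwise independent finite random variables, each a
deterministic function of the other two, then each is uniformly distributed on
its support and the three supports have the same size. -/
theorem pairwise_indep_functional_triple_uniform
    (m₁ m₂ m₃ : ℕ) (p : Fin m₁ × Fin m₂ × Fin m₃ → ℝ)
    (hp : ∀ x, 0 ≤ p x) (hsum : (∑ x, p x) = 1)
    (hind12 : ∀ x y, marg12 p x y = marg1 p x * marg2 p y)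
    (hind13 : ∀ x z, marg13 p x z = marg1 p x * marg3 p z)
    (hind23 : ∀ y z, marg23 p y z = marg2 p y * marg3 p z)
    (hfun : ∀ x y z, 0 < p (x, y, z) →
      p (x, y, z) = marg12 p x y ∧ p (x, y, z) = marg13 p x z ∧
      p (x, y, z) = marg23 p y z) :
    (∀ x x', 0 < marg1 p x → 0 < marg1 p x' → marg1 p x = marg1 p x') ∧
    (∀ y y', 0 < marg2 p y → 0 < marg2 p y' → marg2 p y = marg2 p y') ∧
    (∀ z z', 0 < marg3 p z → 0 < marg3 p z' → marg3 p z = marg3 p z') ∧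
    (Finset.univ.filter fun x => 0 < marg1 p x).card =
      (Finset.univ.filter fun y => 0 < marg2 p y).card ∧
    (Finset.univ.filter fun y => 0 < marg2 p y).card =
      (Finset.univ.filter fun z => 0 < marg3 p z).card :=
  pairwise_indep_functional_triple_uniform_general m₁ m₂ m₃ p hp hind12 hind13 hind23 hfun
end

section
/- Let X₁, X₂, X₃ be pairwise independent random variables on finite alphabets, each a deterministic function of the other two, with common support size k. Then H(X₁) = H(X₂) = H(X₃) = log k and H(X₁,X₂) = H(X₁,X₃) = H(X₂,X₃) = H(X₁,X₂,X₃) = 2 log k. -/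
/-!
At a point of positive mass the hypotheses give `p = p₁p₂ = p₁p₃ = p₂p₃`, so the three
marginals agree there. Since `p₁₃ = p₁p₃`, any two positive values `p₁(x)`, `p₃(z)` are linked
by such a point (likewise for `p₂`, `p₃`), so the marginals take values in `{0, c}` with
`c = 1/k`, while the pair marginals and `p` take values in `{0, c²}`. A distribution with
values in `{0, c}` has entropy `-log c`.
-/

open Finset

theorem exists_pos_of_sum_pos_s12 {ι : Type*} {s : Finset ι} {f : ι → ℝ}
    (hf : 0 < ∑ i ∈ s, f i) : ∃ i ∈ s, 0 < f i :=
  exists_lt_of_sum_lt (f := 0) (by simpa using hf)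

section TwoValued

variable {ι : Type*} [Fintype ι] {f : ι → ℝ} {c : ℝ}

theorem sum_eq_card_mul_of_forall_eq_zero_or_eq (hc : 0 < c) (hf : ∀ i, f i = 0 ∨ f i = c) :
    ∑ i, f i = (univ.filter fun i => 0 < f i).card * c := by
  rw [← nsmul_eq_mul, ← sum_const, sum_filter]
  refine sum_congr rfl fun i _ => ?_
  rcases hf i with h | h <;> simp [h, hc]

theorem sum_mul_logb_eq_logb_of_forall_eq_zero_or_eq (b : ℝ) (hf : ∀ i, f i = 0 ∨ f i = c)
    (hsum : ∑ i, f i = 1) : ∑ i, f i * Real.logb b (f i) = Real.logb b c := by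
  calc ∑ i, f i * Real.logb b (f i) = ∑ i, f i * Real.logb b c :=
        sum_congr rfl fun i _ => by rcases hf i with h | h <;> simp [h]
    _ = Real.logb b c := by rw [← sum_mul, hsum, one_mul]

theorem mul_eq_zero_or_eq_mul_self {a a' : ℝ} (ha : a = 0 ∨ a = c) (ha' : a' = 0 ∨ a' = c) :
    a * a' = 0 ∨ a * a' = c * c := by
  rcases ha with rfl | rfl <;> rcases ha' with rfl | rfl <;> simp

theorem sum_sum_mul_logb_eq_logb_mul_self {κ : Type*} [Fintype κ] {g : κ → ℝ} (b : ℝ)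
    (hf : ∀ i, f i = 0 ∨ f i = c) (hg : ∀ j, g j = 0 ∨ g j = c)
    (hfs : ∑ i, f i = 1) (hgs : ∑ j, g j = 1) :
    ∑ i, ∑ j, f i * g j * Real.logb b (f i * g j) = Real.logb b (c * c) := by
  rw [← Fintype.sum_prod_type' (fun i j => f i * g j * Real.logb b (f i * g j))]
  refine sum_mul_logb_eq_logb_of_forall_eq_zero_or_eq b
    (fun w => mul_eq_zero_or_eq_mul_self (hf w.1) (hg w.2)) ?_
  rw [Fintype.sum_prod_type' (fun i j => f i * g j), ← sum_mul_sum, hfs, hgs, one_mul]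

end TwoValued

section Marginals

variable {A B C : Type} [Fintype A] [Fintype B] [Fintype C] (p : A × B × C → ℝ)

theorem sum_marg1 : ∑ x, marg1 p x = ∑ w, p w := by
  simp only [marg1, Fintype.sum_prod_type]

theorem sum_marg2 : ∑ y, marg2 p y = ∑ w, p w := by
  simp only [marg2, Fintype.sum_prod_type]
  exact sum_comm

theorem sum_marg3 : ∑ z, marg3 p z = ∑ w, p w := by
  simp only [marg3, Fintype.sum_prod_type]
  rw [sum_comm]
  exact sum_congr rfl fun _ _ => sum_comm

structure IsPairwiseIndepFunctional : Prop where
  nonneg : ∀ w, 0 ≤ p w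
  indep12 : ∀ x y, marg12 p x y = marg1 p x * marg2 p y
  indep13 : ∀ x z, marg13 p x z = marg1 p x * marg3 p z
  indep23 : ∀ y z, marg23 p y z = marg2 p y * marg3 p z
  functional : ∀ x y z, 0 < p (x, y, z) →
    p (x, y, z) = marg12 p x y ∧ p (x, y, z) = marg13 p x z ∧ p (x, y, z) = marg23 p y z

namespace IsPairwiseIndepFunctional

variable {p} (hP : IsPairwiseIndepFunctional p)
include hP

theorem marg1_nonneg (x : A) : 0 ≤ marg1 p x :=
  sum_nonneg fun _ _ => sum_nonneg fun _ _ => hP.nonneg _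

theorem marg2_nonneg (y : B) : 0 ≤ marg2 p y :=
  sum_nonneg fun _ _ => sum_nonneg fun _ _ => hP.nonneg _

theorem marg3_nonneg (z : C) : 0 ≤ marg3 p z :=
  sum_nonneg fun _ _ => sum_nonneg fun _ _ => hP.nonneg _

theorem marg_eq_of_pos {x : A} {y : B} {z : C} (h : 0 < p (x, y, z)) :
    marg1 p x = marg2 p y ∧ marg2 p y = marg3 p z := by
  obtain ⟨h12, h13, h23⟩ := hP.functional x y z h
  rw [hP.indep12] at h12
  rw [hP.indep13] at h13
  rw [hP.indep23] at h23
  have h13_ne : marg1 p x * marg3 p z ≠ 0 := h13 ▸ h.ne'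
  exact ⟨mul_right_cancel₀ (right_ne_zero_of_mul h13_ne) (h13.symm.trans h23),
    mul_left_cancel₀ (left_ne_zero_of_mul h13_ne) (h12.symm.trans h13)⟩

theorem marg1_eq_marg3 {x : A} {z : C} (hx : 0 < marg1 p x) (hz : 0 < marg3 p z) :
    marg1 p x = marg3 p z := by
  have hxz : 0 < marg13 p x z := by rw [hP.indep13]; exact mul_pos hx hz
  obtain ⟨y, -, hy⟩ := exists_pos_of_sum_pos_s12 hxz
  obtain ⟨h12, h23⟩ := hP.marg_eq_of_pos hy
  exact h12.trans h23

theorem marg2_eq_marg3 {y : B} {z : C} (hy : 0 < marg2 p y) (hz : 0 < marg3 p z) :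
    marg2 p y = marg3 p z := by
  have hyz : 0 < marg23 p y z := by rw [hP.indep23]; exact mul_pos hy hz
  obtain ⟨x, -, hx⟩ := exists_pos_of_sum_pos_s12 hyz
  exact (hP.marg_eq_of_pos hx).2

theorem exists_marg_eq_zero_or_eq (hsum : ∑ w, p w = 1) :
    ∃ c, 0 < c ∧ (∀ x, marg1 p x = 0 ∨ marg1 p x = c) ∧ (∀ y, marg2 p y = 0 ∨ marg2 p y = c) ∧
      ∀ z, marg3 p z = 0 ∨ marg3 p z = c := by
  obtain ⟨a, -, ha⟩ := exists_pos_of_sum_pos_s12 (s := univ) (f := marg1 p)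
    (by rw [sum_marg1, hsum]; exact one_pos)
  obtain ⟨d, -, hd⟩ := exists_pos_of_sum_pos_s12 (s := univ) (f := marg3 p)
    (by rw [sum_marg3, hsum]; exact one_pos)
  refine ⟨marg3 p d, hd, fun x => ?_, fun y => ?_, fun z => ?_⟩
  · exact (hP.marg1_nonneg x).eq_or_lt.imp Eq.symm fun hx => hP.marg1_eq_marg3 hx hd
  · exact (hP.marg2_nonneg y).eq_or_lt.imp Eq.symm fun hy => hP.marg2_eq_marg3 hy hd
  · exact (hP.marg3_nonneg z).eq_or_lt.imp Eq.symm fun hz =>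
      (hP.marg1_eq_marg3 ha hz).symm.trans (hP.marg1_eq_marg3 ha hd)

theorem apply_eq_zero_or_eq_mul_self {c : ℝ} (h1 : ∀ x, marg1 p x = 0 ∨ marg1 p x = c)
    (h2 : ∀ y, marg2 p y = 0 ∨ marg2 p y = c) (w : A × B × C) : p w = 0 ∨ p w = c * c := by
  obtain ⟨x, y, z⟩ := w
  rcases (hP.nonneg (x, y, z)).eq_or_lt with h | h
  · exact .inl h.symm
  · rw [(hP.functional x y z h).1, hP.indep12]
    exact mul_eq_zero_or_eq_mul_self (h1 x) (h2 y)

end IsPairwiseIndepFunctional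

end Marginals

theorem pairwise_indep_functional_triple_entropies_general
    (m₁ m₂ m₃ k : ℕ) (p : Fin m₁ × Fin m₂ × Fin m₃ → ℝ)
    (hp : ∀ x, 0 ≤ p x) (hsum : (∑ x, p x) = 1)
    (hind12 : ∀ x y, marg12 p x y = marg1 p x * marg2 p y)
    (hind13 : ∀ x z, marg13 p x z = marg1 p x * marg3 p z)
    (hind23 : ∀ y z, marg23 p y z = marg2 p y * marg3 p z)
    (hfun : ∀ x y z, 0 < p (x, y, z) →
      p (x, y, z) = marg12 p x y ∧ p (x, y, z) = marg13 p x z ∧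
      p (x, y, z) = marg23 p y z)
    (hk1 : (Finset.univ.filter fun x => 0 < marg1 p x).card = k) :
    (-∑ x, marg1 p x * Real.logb 2 (marg1 p x)) = Real.logb 2 k ∧
    (-∑ y, marg2 p y * Real.logb 2 (marg2 p y)) = Real.logb 2 k ∧
    (-∑ z, marg3 p z * Real.logb 2 (marg3 p z)) = Real.logb 2 k ∧
    (-∑ x, ∑ y, marg12 p x y * Real.logb 2 (marg12 p x y)) = 2 * Real.logb 2 k ∧
    (-∑ x, ∑ z, marg13 p x z * Real.logb 2 (marg13 p x z)) = 2 * Real.logb 2 k ∧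
    (-∑ y, ∑ z, marg23 p y z * Real.logb 2 (marg23 p y z)) = 2 * Real.logb 2 k ∧
    (-∑ w, p w * Real.logb 2 (p w)) = 2 * Real.logb 2 k := by
  have hP : IsPairwiseIndepFunctional p := ⟨hp, hind12, hind13, hind23, hfun⟩
  obtain ⟨c, hc, h1, h2, h3⟩ := hP.exists_marg_eq_zero_or_eq hsum
  have hs1 : ∑ x, marg1 p x = 1 := (sum_marg1 p).trans hsum
  have hs2 : ∑ y, marg2 p y = 1 := (sum_marg2 p).trans hsum
  have hs3 : ∑ z, marg3 p z = 1 := (sum_marg3 p).trans hsum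
  have hkc : (k : ℝ) * c = 1 := by
    rw [← hk1, ← sum_eq_card_mul_of_forall_eq_zero_or_eq hc h1, hs1]
  have hlogc : Real.logb 2 c = -Real.logb 2 k := by
    rw [eq_inv_of_mul_eq_one_right hkc, Real.logb_inv]
  have hlogcc : Real.logb 2 (c * c) = -(2 * Real.logb 2 k) := by
    rw [Real.logb_mul hc.ne' hc.ne', hlogc]
    ring
  simp only [hind12, hind13, hind23,
    sum_mul_logb_eq_logb_of_forall_eq_zero_or_eq 2 h1 hs1,
    sum_mul_logb_eq_logb_of_forall_eq_zero_or_eq 2 h2 hs2,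
    sum_mul_logb_eq_logb_of_forall_eq_zero_or_eq 2 h3 hs3,
    sum_sum_mul_logb_eq_logb_mul_self 2 h1 h2 hs1 hs2,
    sum_sum_mul_logb_eq_logb_mul_self 2 h1 h3 hs1 hs3,
    sum_sum_mul_logb_eq_logb_mul_self 2 h2 h3 hs2 hs3,
    sum_mul_logb_eq_logb_of_forall_eq_zero_or_eq 2 (hP.apply_eq_zero_or_eq_mul_self h1 h2) hsum,
    hlogc, hlogcc, neg_neg, and_self]

/-- If X₁, X₂, X₃ are pairwise independent finite random variables, each a
deterministic function of the other two, with common support size k, then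
H(Xᵢ) = log₂ k and all joint entropies of two or three of them equal 2·log₂ k;
i.e. the entropy function of (X₁,X₂,X₃) is (log₂ k)·r(U_{2,3}). -/
theorem pairwise_indep_functional_triple_entropies
    (m₁ m₂ m₃ k : ℕ) (p : Fin m₁ × Fin m₂ × Fin m₃ → ℝ)
    (hp : ∀ x, 0 ≤ p x) (hsum : (∑ x, p x) = 1)
    (hind12 : ∀ x y, marg12 p x y = marg1 p x * marg2 p y)
    (hind13 : ∀ x z, marg13 p x z = marg1 p x * marg3 p z)
    (hind23 : ∀ y z, marg23 p y z = marg2 p y * marg3 p z)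
    (hfun : ∀ x y z, 0 < p (x, y, z) →
      p (x, y, z) = marg12 p x y ∧ p (x, y, z) = marg13 p x z ∧
      p (x, y, z) = marg23 p y z)
    (hk1 : (Finset.univ.filter fun x => 0 < marg1 p x).card = k)
    (hk2 : (Finset.univ.filter fun y => 0 < marg2 p y).card = k)
    (hk3 : (Finset.univ.filter fun z => 0 < marg3 p z).card = k) :
    (-∑ x, marg1 p x * Real.logb 2 (marg1 p x)) = Real.logb 2 k ∧
    (-∑ y, marg2 p y * Real.logb 2 (marg2 p y)) = Real.logb 2 k ∧
    (-∑ z, marg3 p z * Real.logb 2 (marg3 p z)) = Real.logb 2 k ∧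
    (-∑ x, ∑ y, marg12 p x y * Real.logb 2 (marg12 p x y)) = 2 * Real.logb 2 k ∧
    (-∑ x, ∑ z, marg13 p x z * Real.logb 2 (marg13 p x z)) = 2 * Real.logb 2 k ∧
    (-∑ y, ∑ z, marg23 p y z * Real.logb 2 (marg23 p y z)) = 2 * Real.logb 2 k ∧
    (-∑ w, p w * Real.logb 2 (p w)) = 2 * Real.logb 2 k :=
  pairwise_indep_functional_triple_entropies_general m₁ m₂ m₃ k p hp hsum hind12 hind13 hind23 hfun
    hk1
end

section
/- Let X₁, X₂ be finite random variables and X₃ = f(X₁,X₂) a function of them such that X₂ and X₃ are independent. Consider the bipartite graph on supp(X₁) ∪ supp(X₂) with an edge (x₁,x₂) iff p(x₁,x₂) > 0, edges colored by the value f(x₁,x₂). If |supp(X₃)| = k, then every vertex x₂ ∈ supp(X₂) is incident to edges of all k colors; consequently each connected component of the graph contains at least k vertices from supp(X₁). -/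
/-! By independence, the mass of color `c` on the edges at `y` is `P(X₂ = y) · P(X₃ = c) > 0`,
so some edge at `y` has color `c`. Choosing one such neighbour for each of the `k` colors gives
`k` neighbours of `y`, distinct because their edges to `y` have distinct colors. -/

open Finset

/-- The bipartite graph on V₁ ⊕ V₂ determined by the edge relation E. -/
def bipGraph {V₁ V₂ : Type} (E : V₁ → V₂ → Prop) : SimpleGraph (V₁ ⊕ V₂) :=
  SimpleGraph.fromRel (fun a b => ∃ u v, a = Sum.inl u ∧ b = Sum.inr v ∧ E u v)

theorem bipGraph_adj_inl_inr {V₁ V₂ : Type} {E : V₁ → V₂ → Prop} {u : V₁} {v : V₂} :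
    (bipGraph E).Adj (Sum.inl u) (Sum.inr v) ↔ E u v := by
  simp [bipGraph]

theorem Finset.exists_pos_of_sum_ite_pos {ι M : Type*} [AddCommMonoid M] [LinearOrder M]
    [IsOrderedCancelAddMonoid M] {s : Finset ι} {P : ι → Prop} [DecidablePred P] {g : ι → M}
    (h : 0 < ∑ i ∈ s, if P i then g i else 0) : ∃ i ∈ s, 0 < g i ∧ P i := by
  rw [← sum_filter, ← sum_const_zero (s := s.filter P)] at h
  obtain ⟨i, hi, hpos⟩ := exists_lt_of_sum_lt h
  exact ⟨i, (mem_filter.mp hi).1, hpos, (mem_filter.mp hi).2⟩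

theorem exists_edge_of_color_of_indep {α β γ : Type*} [Fintype α] [Fintype β] [DecidableEq γ]
    (p : α × β → ℝ) (f : α → β → γ) {y : β} {c : γ}
    (hind : (∑ x, if f x y = c then p (x, y) else 0) =
      (∑ x, p (x, y)) * ∑ x, ∑ y', if f x y' = c then p (x, y') else 0)
    (hy : 0 < ∑ x, p (x, y)) (hc : 0 < ∑ x, ∑ y', if f x y' = c then p (x, y') else 0) :
    ∃ x, 0 < p (x, y) ∧ f x y = c := by
  obtain ⟨x, -, hx⟩ := exists_pos_of_sum_ite_pos (hind ▸ mul_pos hy hc)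
  exact ⟨x, hx⟩

theorem card_le_ncard_reachable_of_forall_exists_adj {α β γ : Type} [Finite α]
    (E : α → β → Prop) (f : α → β → γ) (y : β) (S : Finset γ)
    (hS : ∀ c ∈ S, ∃ x, E x y ∧ f x y = c) :
    #S ≤ {x | (bipGraph E).Reachable (Sum.inl x) (Sum.inr y)}.ncard := by
  set T := {x | (bipGraph E).Reachable (Sum.inl x) (Sum.inr y)}
  have hST : (S : Set γ) ⊆ (f · y) '' T := fun c hc ↦ by
    obtain ⟨x, hxy, rfl⟩ := hS c hc
    exact ⟨x, (bipGraph_adj_inl_inr.mpr hxy).reachable, rfl⟩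
  calc #S = (S : Set γ).ncard := (Set.ncard_coe_finset S).symm
    _ ≤ ((f · y) '' T).ncard := Set.ncard_le_ncard hST (Set.toFinite _)
    _ ≤ T.ncard := Set.ncard_image_le (Set.toFinite T)

theorem all_colors_at_each_vertex_general
    (m₁ m₂ m₃ k : ℕ) (p : Fin m₁ × Fin m₂ → ℝ) (f : Fin m₁ → Fin m₂ → Fin m₃)
    (hind : ∀ (y : Fin m₂) (c : Fin m₃),
      (∑ x, if f x y = c then p (x, y) else 0) =
        (∑ x, p (x, y)) * (∑ x, ∑ y', if f x y' = c then p (x, y') else 0))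
    (hk : (Finset.univ.filter
      fun c => 0 < ∑ x, ∑ y, if f x y = c then p (x, y) else 0).card = k) :
    (∀ y : Fin m₂, 0 < (∑ x, p (x, y)) →
      ∀ c : Fin m₃, 0 < (∑ x, ∑ y', if f x y' = c then p (x, y') else 0) →
        ∃ x : Fin m₁, 0 < p (x, y) ∧ f x y = c) ∧
    (∀ y : Fin m₂, 0 < (∑ x, p (x, y)) →
      k ≤ {x : Fin m₁ |
        (bipGraph fun x' y' => 0 < p (x', y')).Reachable
          (Sum.inl x) (Sum.inr y)}.ncard) := by
  have all_colors : ∀ y : Fin m₂, 0 < (∑ x, p (x, y)) →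
      ∀ c : Fin m₃, 0 < (∑ x, ∑ y', if f x y' = c then p (x, y') else 0) →
        ∃ x : Fin m₁, 0 < p (x, y) ∧ f x y = c :=
    fun y hy c hc ↦ exists_edge_of_color_of_indep p f (hind y c) hy hc
  refine ⟨all_colors, fun y hy ↦ hk ▸ ?_⟩
  exact card_le_ncard_reachable_of_forall_exists_adj _ f y _
    fun c hc ↦ all_colors y hy c (mem_filter.mp hc).2

/-- Counting step in the proof of Theorem 4: if X₃ = f(X₁,X₂) is independent of
X₂ and |supp(X₃)| = k, then in the bipartite support graph of (X₁,X₂), every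
vertex x₂ ∈ supp(X₂) is incident to edges of all k colors (values of f), and
consequently the connected component of any x₂ ∈ supp(X₂) contains at least k
vertices from supp(X₁). -/
theorem all_colors_at_each_vertex
    (m₁ m₂ m₃ k : ℕ) (p : Fin m₁ × Fin m₂ → ℝ) (f : Fin m₁ → Fin m₂ → Fin m₃)
    (hp : ∀ x, 0 ≤ p x) (hsum : (∑ x, p x) = 1)
    (hind : ∀ (y : Fin m₂) (c : Fin m₃),
      (∑ x, if f x y = c then p (x, y) else 0) =
        (∑ x, p (x, y)) * (∑ x, ∑ y', if f x y' = c then p (x, y') else 0))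
    (hk : (Finset.univ.filter
      fun c => 0 < ∑ x, ∑ y, if f x y = c then p (x, y) else 0).card = k) :
    (∀ y : Fin m₂, 0 < (∑ x, p (x, y)) →
      ∀ c : Fin m₃, 0 < (∑ x, ∑ y', if f x y' = c then p (x, y') else 0) →
        ∃ x : Fin m₁, 0 < p (x, y) ∧ f x y = c) ∧
    (∀ y : Fin m₂, 0 < (∑ x, p (x, y)) →
      k ≤ {x : Fin m₁ |
        (bipGraph fun x' y' => 0 < p (x', y')).Reachable
          (Sum.inl x) (Sum.inr y)}.ncard) :=
  all_colors_at_each_vertex_general m₁ m₂ m₃ k p f hind hk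
end

section
/- Let k be a positive integer and (α(x) : x ∈ S) a partition of k into positive integers indexed by a finite set S. Let X₁ be uniform on {0,...,k−1}, X₃ independent of X₁ and uniform on {0,...,k−1}, X₄ = X₁ + X₃ mod k, and X₂ = φ(X₁) where φ maps a partition block A(x) of {0,...,k−1} with |A(x)| = α(x) to x. Then the entropy function of (X₁,X₂,X₃,X₄) equals a·r₁ + b·r₂ where r₁, r₂ are the rank functions of W^{12}_2 and U^{134}_{2,3}, a = H(α(x)/k : x ∈ S), and b = log k − a. -/
/-!
Under the uniform distribution the entropy of a random variable depends only on the partition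
of the sample space into its fibres, and it is unchanged by a measure-preserving relabelling of
the sample space. With `ω = (X₁, X₃)` uniform on `Fin k × Fin k`, every subvector `X_A` has, up
to the shear `(x, y) ↦ (x, x + y)` (which carries `X₃` to `X₄`), the fibres of a pair
`(f X₁, g X₃)` with `f, g ∈ {const, id, φ}`. As `X₁` and `X₃` are independent, the entropy of
such a pair is `H(f X₁) + H(g X₃)`, built from `H(const) = 0`, `H(X₁) = log k` and
`H(φ X₁) = a`; comparing with the rank values of `W^{12}₂` and `U^{134}_{2,3}` gives all sixteen
identities.
-/

open Finset

/-- Rank function of the rank-2 wheel matroid W^{12}₂ on N₄ = {0,1,2,3} in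
which 0 and 1 are parallel: r(A) = min(2, number of parallel classes
{0,1},{2},{3} meeting A). -/
noncomputable def rW12 (A : Finset (Fin 4)) : ℝ :=
  min (2 : ℝ)
    (((if (A ∩ ({0,1} : Finset (Fin 4))).Nonempty then 1 else 0) +
      (if (2 : Fin 4) ∈ A then 1 else 0) +
      (if (3 : Fin 4) ∈ A then 1 else 0) : ℝ))

noncomputable def uniformWeight (Ω : Type) [Fintype Ω] : Ω → ℝ :=
  fun _ => (Fintype.card Ω : ℝ)⁻¹

section Entropy

variable {Ω S T : Type} [Fintype Ω] [DecidableEq S] [DecidableEq T]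

theorem ent_eq_sum_univ [Fintype S] (p : Ω → ℝ) (Y : Ω → S) :
    ent p Y = -∑ s, pr p Y s * Real.logb 2 (pr p Y s) := by
  rw [ent, Finset.sum_subset (Finset.subset_univ _)]
  intro s _ hs
  have : pr p Y s = 0 := Finset.sum_eq_zero fun ω _ =>
    if_neg fun h => hs (Finset.mem_image.2 ⟨ω, Finset.mem_univ ω, h⟩)
  rw [this, zero_mul]

theorem ent_eq_sum_sample (p : Ω → ℝ) (Y : Ω → S) :
    ent p Y = -∑ ω, p ω * Real.logb 2 (pr p Y (Y ω)) := by
  rw [ent, ← Finset.sum_fiberwise_of_maps_to (g := Y)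
    fun ω _ => Finset.mem_image_of_mem Y (Finset.mem_univ ω)]
  congr 1
  refine Finset.sum_congr rfl fun s _ => ?_
  rw [pr, ← Finset.sum_filter, Finset.sum_mul]
  refine Finset.sum_congr rfl fun ω hω => ?_
  rw [(Finset.mem_filter.1 hω).2, pr, Finset.sum_filter]

theorem ent_congr_of_fibers (p : Ω → ℝ) (Y : Ω → S) (Z : Ω → T)
    (h : ∀ ω ω', Y ω' = Y ω ↔ Z ω' = Z ω) : ent p Y = ent p Z := by
  simp only [ent_eq_sum_sample, pr, h]

theorem ent_comp_perm (p : Ω → ℝ) (Y : Ω → S) (g : Equiv.Perm Ω) (hp : ∀ ω, p (g ω) = p ω) :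
    ent p (Y ∘ g) = ent p Y := by
  have hpr : ∀ s, pr p (Y ∘ g) s = pr p Y s := fun s => by
    rw [pr, pr, ← Equiv.sum_comp g fun ω => if Y ω = s then p ω else 0]
    simp only [Function.comp_apply, hp]
  rw [ent_eq_sum_sample, ent_eq_sum_sample,
    ← Equiv.sum_comp g fun ω => p ω * Real.logb 2 (pr p Y (Y ω))]
  simp only [Function.comp_apply, hpr, hp]

theorem pr_uniformWeight (Y : Ω → S) (s : S) :
    pr (uniformWeight Ω) Y s = #{ω | Y ω = s} / Fintype.card Ω := by
  simp [pr, uniformWeight, ← Finset.sum_filter, div_eq_mul_inv]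

theorem ent_uniformWeight_eq_sum_univ [Fintype S] (Y : Ω → S) :
    ent (uniformWeight Ω) Y =
      -∑ s, #{ω | Y ω = s} / Fintype.card Ω * Real.logb 2 (#{ω | Y ω = s} / Fintype.card Ω) := by
  simp only [ent_eq_sum_univ, pr_uniformWeight]

theorem ent_uniformWeight_eq_sum_sample (Y : Ω → S) :
    ent (uniformWeight Ω) Y =
      -∑ ω, Real.logb 2 (#{ω' | Y ω' = Y ω} / Fintype.card Ω) / Fintype.card Ω := by
  simp only [ent_eq_sum_sample, pr_uniformWeight, uniformWeight, inv_mul_eq_div]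

theorem ent_uniformWeight_const (c : S) : ent (uniformWeight Ω) (fun _ => c) = 0 := by
  have : Real.logb 2 ((Fintype.card Ω : ℝ) / Fintype.card Ω) = 0 := by
    rcases eq_or_ne (Fintype.card Ω : ℝ) 0 with h | h <;> simp [h]
  simp [ent_uniformWeight_eq_sum_sample, this]

theorem ent_uniformWeight_of_injective {Y : Ω → S} (hY : Function.Injective Y) :
    ent (uniformWeight Ω) Y = Real.logb 2 (Fintype.card Ω) := by
  have hfib : ∀ ω, #{ω' | Y ω' = Y ω} = 1 := fun ω =>
    Finset.card_eq_one.2 ⟨ω, by ext; simp [hY.eq_iff]⟩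
  rcases isEmpty_or_nonempty Ω with hΩ | hΩ
  · simp [ent_uniformWeight_eq_sum_sample]
  have hn : (Fintype.card Ω : ℝ) ≠ 0 := by positivity
  simp only [ent_uniformWeight_eq_sum_sample, hfib, Finset.sum_const, Finset.card_univ,
    nsmul_eq_mul]
  field_simp
  simp [Real.logb_inv]

theorem ent_uniformWeight_prod {β γ : Type} [Fintype β] [Fintype γ] [Nonempty β] [Nonempty γ]
    (f : β → S) (g : γ → T) :
    ent (uniformWeight (β × γ)) (fun ω => (f ω.1, g ω.2)) =
      ent (uniformWeight β) f + ent (uniformWeight γ) g := by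
  have hfib : ∀ ω : β × γ, #{ω' : β × γ | (f ω'.1, g ω'.2) = (f ω.1, g ω.2)} =
      #{x | f x = f ω.1} * #{y | g y = g ω.2} := fun ω => by
    rw [← Finset.card_product]
    congr 1
    ext ⟨x, y⟩
    simp
  have hlog : ∀ x y, Real.logb 2 ((#{x' | f x' = f x} * #{y' | g y' = g y} : ℕ) /
      ((Fintype.card β * Fintype.card γ : ℕ) : ℝ)) =
        Real.logb 2 (#{x' | f x' = f x} / Fintype.card β) +
          Real.logb 2 (#{y' | g y' = g y} / Fintype.card γ) := fun x y => by
    have hx : 0 < #{x' | f x' = f x} := Finset.card_pos.2 ⟨x, by simp⟩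
    have hy : 0 < #{y' | g y' = g y} := Finset.card_pos.2 ⟨y, by simp⟩
    push_cast
    rw [mul_div_mul_comm, Real.logb_mul (by positivity) (by positivity)]
  have hβ : (Fintype.card β : ℝ) ≠ 0 := by positivity
  have hγ : (Fintype.card γ : ℝ) ≠ 0 := by positivity
  simp only [ent_uniformWeight_eq_sum_sample, hfib, Fintype.card_prod, Fintype.sum_prod_type, hlog,
    add_div, Finset.sum_add_distrib, Finset.sum_const, Finset.card_univ, nsmul_eq_mul,
    ← Finset.sum_div, ← Finset.mul_sum]
  push_cast
  field_simp
  ring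

theorem ent_uniformWeight_eq_add_of_fibers {β γ U : Type} [Fintype β] [Fintype γ] [Nonempty β]
    [Nonempty γ] [DecidableEq U] (Y : β × γ → U) (f : β → S) (g : γ → T)
    (e : Equiv.Perm (β × γ))
    (h : ∀ ω ω', Y ω' = Y ω ↔ f (e ω').1 = f (e ω).1 ∧ g (e ω').2 = g (e ω).2) :
    ent (uniformWeight (β × γ)) Y = ent (uniformWeight β) f + ent (uniformWeight γ) g := by
  rw [ent_congr_of_fibers _ Y ((fun ω => (f ω.1, g ω.2)) ∘ e) (by simpa [Prod.ext_iff] using h),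
    ent_comp_perm _ _ e fun _ => rfl, ent_uniformWeight_prod]

end Entropy

section Wheel

variable {k t : ℕ}

theorem uniformWeight_fin_prod_self :
    uniformWeight (Fin k × Fin k) = fun _ => ((k : ℝ) ^ 2)⁻¹ := by
  funext
  simp [uniformWeight, sq]

/-- `(X₁, X₂, X₃, X₄)` as a function of `ω = (X₁, X₃)`; addition in `Fin k` is addition mod `k`. -/
def wheelVector (φ : Fin k → Fin t) (ω : Fin k × Fin k) (j : Fin 4) : ℕ :=
  if j = 0 then ω.1 else if j = 1 then φ ω.1 else if j = 2 then ω.2 else (ω.1 + ω.2 : Fin k)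

@[simp]
theorem restrict_wheelVector_eq_iff (φ : Fin k → Fin t) (A : Finset (Fin 4))
    (ω ω' : Fin k × Fin k) :
    (fun i : A => wheelVector φ ω' i) = (fun i : A => wheelVector φ ω i) ↔
      (0 ∈ A → ω'.1 = ω.1) ∧ (1 ∈ A → φ ω'.1 = φ ω.1) ∧ (2 ∈ A → ω'.2 = ω.2) ∧
        (3 ∈ A → ω'.1 + ω'.2 = ω.1 + ω.2) := by
  simp [funext_iff, Fin.forall_fin_succ, wheelVector, Fin.val_inj]

theorem ent_restrict_wheelVector [NeZero k] (φ : Fin k → Fin t) (A : Finset (Fin 4)) :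
    ent (uniformWeight (Fin k × Fin k)) (fun ω (i : A) => wheelVector φ ω i) =
      ent (uniformWeight (Fin k)) φ * rW12 A +
        (Real.logb 2 k - ent (uniformWeight (Fin k)) φ) * rkU 2 {0, 2, 3} A := by
  have hconst : ent (uniformWeight (Fin k)) (fun _ => ()) = 0 := ent_uniformWeight_const ()
  have hid : ent (uniformWeight (Fin k)) id = Real.logb 2 k := by
    simpa using ent_uniformWeight_of_injective (Function.injective_id (α := Fin k))
  have hcard : Real.logb 2 (Fintype.card (Fin k × Fin k)) = 2 * Real.logb 2 k := by
    simp [Real.logb_mul, NeZero.ne k, two_mul]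
  let shear : Equiv.Perm (Fin k × Fin k) := Equiv.prodShear (Equiv.refl _) Equiv.addLeft
  obtain rfl | rfl | rfl | rfl | rfl | rfl | rfl | rfl | rfl | rfl | rfl | rfl | rfl | rfl | rfl |
      rfl : A = ∅ ∨ A = {0} ∨ A = {1} ∨ A = {2} ∨ A = {3} ∨ A = {0, 1} ∨ A = {1, 2} ∨
      A = {1, 3} ∨ A = {0, 2} ∨ A = {0, 3} ∨ A = {2, 3} ∨ A = {0, 1, 2} ∨ A = {0, 1, 3} ∨
      A = {0, 2, 3} ∨ A = {1, 2, 3} ∨ A = {0, 1, 2, 3} := by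
    revert A; decide
  · rw [ent_uniformWeight_eq_add_of_fibers _ (fun _ => ()) (fun _ => ()) 1 (by simp), hconst]
    norm_num [rW12, rkU]
  · rw [ent_uniformWeight_eq_add_of_fibers _ id (fun _ => ()) 1 (by simp), hid, hconst]
    norm_num +decide [rW12, rkU]
  · rw [ent_uniformWeight_eq_add_of_fibers _ φ (fun _ => ()) 1 (by simp), hconst]
    norm_num +decide [rW12, rkU]
  · rw [ent_uniformWeight_eq_add_of_fibers _ (fun _ => ()) id 1 (by simp), hconst, hid]
    norm_num +decide [rW12, rkU]
  · rw [ent_uniformWeight_eq_add_of_fibers _ (fun _ => ()) id shear (by simp [shear]), hconst,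
      hid]
    norm_num +decide [rW12, rkU]
  · rw [ent_uniformWeight_eq_add_of_fibers _ id (fun _ => ()) 1 (by simp), hid, hconst]
    norm_num +decide [rW12, rkU]
  · rw [ent_uniformWeight_eq_add_of_fibers _ φ id 1 (by simp), hid]
    norm_num +decide [rW12, rkU]
    ring
  · rw [ent_uniformWeight_eq_add_of_fibers _ φ id shear (by simp [shear]), hid]
    norm_num +decide [rW12, rkU]
    ring
  -- the remaining `A` contain two of `0, 2, 3`, and any two of `X₁, X₃, X₄` determine `ω`
  all_goals
    rw [ent_uniformWeight_of_injective fun ω ω' h => by simp at h; grind, hcard]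
    norm_num +decide [rW12, rkU]
    ring

end Wheel

theorem wheel_face_construction_general (k t : ℕ) (hk : 0 < k)
    (α : Fin t → ℕ)
    (φ : Fin k → Fin t)
    (hφ : ∀ i, (Finset.univ.filter fun x => φ x = i).card = α i)
    (a b : ℝ)
    (hadef : a = -∑ i, ((α i : ℝ) / k) * Real.logb 2 ((α i : ℝ) / k))
    (hbdef : b = Real.logb 2 k - a) :
    ∀ A : Finset (Fin 4),
      ent (fun _ : Fin k × Fin k => ((k : ℝ) ^ 2)⁻¹)
        (fun ω (i : A) =>
          if (i : Fin 4) = 0 then (ω.1 : ℕ)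
          else if (i : Fin 4) = 1 then (φ ω.1 : ℕ)
          else if (i : Fin 4) = 2 then (ω.2 : ℕ)
          else ((ω.1 : ℕ) + (ω.2 : ℕ)) % k) =
      a * rW12 A + b * rkU 2 ({0,2,3} : Finset (Fin 4)) A := by
  have : NeZero k := ⟨hk.ne'⟩
  have ha : ent (uniformWeight (Fin k)) φ = a := by
    simp [ent_uniformWeight_eq_sum_univ, hφ, hadef]
  intro A
  rw [← uniformWeight_fin_prod_self, hbdef, ← ha]
  exact ent_restrict_wheelVector φ A

/-- Achievability construction of Theorem 6: with X₁, X₃ independent uniform on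
{0,…,k−1}, X₄ = X₁ + X₃ mod k and X₂ = φ(X₁) where φ has fibers of sizes
(α i), the entropy function of (X₁,X₂,X₃,X₄) equals a·r(W^{12}₂) +
b·r(U^{134}_{2,3}) with a = H(α i / k : i) and b = log₂ k − a. -/
theorem wheel_face_construction (k t : ℕ) (hk : 0 < k)
    (α : Fin t → ℕ) (hα : ∀ i, 0 < α i) (hαsum : (∑ i, α i) = k)
    (φ : Fin k → Fin t)
    (hφ : ∀ i, (Finset.univ.filter fun x => φ x = i).card = α i)
    (a b : ℝ)
    (hadef : a = -∑ i, ((α i : ℝ) / k) * Real.logb 2 ((α i : ℝ) / k))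
    (hbdef : b = Real.logb 2 k - a) :
    ∀ A : Finset (Fin 4),
      ent (fun _ : Fin k × Fin k => ((k : ℝ) ^ 2)⁻¹)
        (fun ω (i : A) =>
          if (i : Fin 4) = 0 then (ω.1 : ℕ)
          else if (i : Fin 4) = 1 then (φ ω.1 : ℕ)
          else if (i : Fin 4) = 2 then (ω.2 : ℕ)
          else ((ω.1 : ℕ) + (ω.2 : ℕ)) % k) =
      a * rW12 A + b * rkU 2 ({0,2,3} : Finset (Fin 4)) A :=
  wheel_face_construction_general k t hk α φ hφ a b hadef hbdef
end
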